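/- arXiv:2512.19822 — 4 statements merged into one kernel-verified Lean document; each statement's English description precedes it below -/
import Mathlib

section
/- For all 0 ≤ k ≤ n, all (ε₁,…,ε_k) ∈ {−1,1}^k and all (η₁,…,η_{n−k}) ∈ {−1,1}^{n−k}, one has P(ξ̃¹_1 = ε₁, …, ξ̃¹_k = ε_k, ξ̃²_1 = η₁, …, ξ̃²_{n−k} = η_{n−k}, H_n = k) = p̃₁^I q̃₁^{k−I} p̃₂^J q̃₂^{(n−k)−J} · C(n,k) h₁^k h₂^{n−k}, where p̃_i = p_i/h_i, q̃_i = q_i/h_i, I = #{j ≤ k : ε_j = 1}, J = #{j ≤ n−k : η_j = 1}, and C(n,k) is the binomial coefficient. Consequently, for each 0 ≤ k ≤ n, the random vectors (ξ̃¹_1,…,ξ̃¹_k), (ξ̃²_1,…,ξ̃²_{n−k}) and the event {H_n = k} are mutually independent. -/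
/-!
Record the first `n` steps as a list and extract from it the lists of nonzero horizontal and
vertical increments. Almost surely every step is a unit vector, and then on `{H_n = k}` these two
lists are exactly `(ξ̃¹_1, …, ξ̃¹_k)` and `(ξ̃²_1, …, ξ̃²_{n-k})`. Conditioning on the first step,
which is independent of the shifted walk, shows that for `|u| + |v| = n` the pair of lists equals
`(u, v)` with probability `C(n, |u|) ∏ μ(uᵢ, 0) ∏ μ(0, vⱼ)`, where `μ` is the law of a step; the
recursion is Pascal's rule. This is the joint law. For the marginal of `(ξ̃¹_1, …, ξ̃¹_k)`, the
joint law shows that its conditional law given `H_N = a ≥ k` does not depend on `a`; since almost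
surely infinitely many steps are horizontal, letting `N → ∞` identifies it. Swapping the
coordinates gives the vertical marginal, and the product of the three marginals is the joint law.
-/

open MeasureTheory ProbabilityTheory Filter Real Topology

noncomputable section

/-- Position of the 2D nearest-neighbour walk after `n` steps (started at the origin). -/
def walk2 {Ω : Type*} (ξ : ℕ → Ω → ℤ × ℤ) (n : ℕ) (ω : Ω) : ℤ × ℤ :=
  ∑ k ∈ Finset.range n, ξ k ω

/-- The stopping times `T_n` of the successive moves of the coordinate `proj` of the walk:
`T_0 = 0` and `T_{n+1} = inf {k > T_n : proj(S_k) ≠ proj(S_{k-1})}`. -/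
def hitTime {Ω : Type*} (ξ : ℕ → Ω → ℤ × ℤ) (proj : ℤ × ℤ → ℤ) : ℕ → Ω → ℕ
  | 0, _ => 0
  | n + 1, ω =>
      sInf {k | hitTime ξ proj n ω < k ∧ proj (walk2 ξ k ω) ≠ proj (walk2 ξ (k - 1) ω)}

/-- `S̃_n`: the coordinate `proj` of the walk watched only when it moves. -/
def watched {Ω : Type*} (ξ : ℕ → Ω → ℤ × ℤ) (proj : ℤ × ℤ → ℤ) (n : ℕ) (ω : Ω) : ℤ :=
  proj (walk2 ξ (hitTime ξ proj n ω) ω)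

/-- `ξ̃_n = S̃_n - S̃_{n-1}`: the increments of the watched walk. -/
def tilXi {Ω : Type*} (ξ : ℕ → Ω → ℤ × ℤ) (proj : ℤ × ℤ → ℤ) (n : ℕ) (ω : Ω) : ℤ :=
  watched ξ proj n ω - watched ξ proj (n - 1) ω

/-- `H_n`: the number of horizontal steps among the first `n` steps. -/
def horizSteps {Ω : Type*} (ξ : ℕ → Ω → ℤ × ℤ) (n : ℕ) (ω : Ω) : ℕ :=
  ((Finset.Icc 1 n).filter (fun k => (walk2 ξ k ω).1 ≠ (walk2 ξ (k - 1) ω).1)).card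

open scoped ENNReal

def stepList {Ω : Type*} (ξ : ℕ → Ω → ℤ × ℤ) (n : ℕ) (ω : Ω) : List (ℤ × ℤ) :=
  List.ofFn fun j : Fin n => ξ j ω

def moves (proj : ℤ × ℤ → ℤ) (l : List (ℤ × ℤ)) : List ℤ :=
  (l.map proj).filter (· ≠ 0)

@[simp] lemma moves_nil (proj : ℤ × ℤ → ℤ) : moves proj [] = [] := rfl

lemma moves_cons (proj : ℤ × ℤ → ℤ) (x : ℤ × ℤ) (l : List (ℤ × ℤ)) :
    moves proj (x :: l) = if proj x = 0 then moves proj l else proj x :: moves proj l := by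
  by_cases h : proj x = 0 <;> simp [moves, h]

lemma moves_append (proj : ℤ × ℤ → ℤ) (l l' : List (ℤ × ℤ)) :
    moves proj (l ++ l') = moves proj l ++ moves proj l' := by
  simp [moves, List.filter_append]

lemma length_stepList {Ω : Type*} (ξ : ℕ → Ω → ℤ × ℤ) (n : ℕ) (ω : Ω) :
    (stepList ξ n ω).length = n :=
  List.length_ofFn

def unitSteps : Finset (ℤ × ℤ) := {(1, 0), (-1, 0), (0, 1), (0, -1)}

lemma length_moves_fst_add_snd (l : List (ℤ × ℤ)) (hl : ∀ x ∈ l, x ∈ unitSteps) :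
    (moves Prod.fst l).length + (moves Prod.snd l).length = l.length := by
  induction l with
  | nil => rfl
  | cons x l ih =>
    have hx : x ∈ unitSteps := hl x List.mem_cons_self
    simp only [unitSteps, Finset.mem_insert, Finset.mem_singleton] at hx
    rcases hx with rfl | rfl | rfl | rfl <;>
      simp [moves_cons, ← ih fun y hy => hl y (List.mem_cons_of_mem _ hy)] <;> omega

section Bridge

variable {Ω : Type*} (proj : ℤ × ℤ →+ ℤ) (ξ : ℕ → Ω → ℤ × ℤ) (ω : Ω)

lemma stepList_succ (n : ℕ) : stepList ξ (n + 1) ω = stepList ξ n ω ++ [ξ n ω] := by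
  rw [stepList, stepList, List.ofFn_succ', List.concat_eq_append]
  rfl

lemma stepList_succ' (n : ℕ) :
    stepList ξ (n + 1) ω = ξ 0 ω :: stepList (fun j => ξ (j + 1)) n ω := by
  simp [stepList, List.ofFn_succ]

lemma length_moves_stepList (n : ℕ) :
    (moves proj (stepList ξ n ω)).length = Nat.count (fun t => proj (ξ t ω) ≠ 0) n := by
  induction n with
  | zero => rfl
  | succ n ih =>
    rw [stepList_succ, moves_append, List.length_append, ih, Nat.count_succ]
    by_cases h : proj (ξ n ω) = 0 <;> simp [moves, h]

lemma getElem_moves_stepList {n i : ℕ} (hi : i < Nat.count (fun t => proj (ξ t ω) ≠ 0) n) :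
    (moves proj (stepList ξ n ω))[i]'((length_moves_stepList proj ξ ω n).symm ▸ hi) =
      proj (ξ (Nat.nth (fun t => proj (ξ t ω) ≠ 0) i) ω) := by
  induction n with
  | zero => simp at hi
  | succ n ih =>
    simp only [stepList_succ, moves_append]
    rcases lt_or_ge i (Nat.count (fun t => proj (ξ t ω) ≠ 0) n) with hlt | hge
    · rw [List.getElem_append_left ((length_moves_stepList proj ξ ω n).symm ▸ hlt), ih hlt]
    · have hsucc := Nat.count_succ (fun t => proj (ξ t ω) ≠ 0) n
      split_ifs at hsucc with hn
      swap; · omega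
      have hi' : i = Nat.count (fun t => proj (ξ t ω) ≠ 0) n := by omega
      rw [List.getElem_append_right ((length_moves_stepList proj ξ ω n).symm ▸ hge)]
      simp [moves, hn, hi', Nat.nth_count (p := fun t => proj (ξ t ω) ≠ 0) hn]

lemma proj_walk2 (t : ℕ) : proj (walk2 ξ t ω) = ∑ s ∈ Finset.range t, proj (ξ s ω) :=
  map_sum proj _ _

lemma proj_walk2_succ_ne_iff (t : ℕ) :
    proj (walk2 ξ t ω) ≠ proj (walk2 ξ (t - 1) ω) ↔ ∃ s, t = s + 1 ∧ proj (ξ s ω) ≠ 0 := by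
  cases t with
  | zero => simp
  | succ s => simp [walk2, Finset.sum_range_succ]

lemma hitTime_succ_eq_of_isLeast {i m : ℕ}
    (hm : IsLeast {s | hitTime ξ proj i ω ≤ s ∧ proj (ξ s ω) ≠ 0} m) :
    hitTime ξ proj (i + 1) ω = m + 1 := by
  refine IsLeast.csInf_eq ⟨⟨by have := hm.1.1; omega, ?_⟩, ?_⟩
  · exact (proj_walk2_succ_ne_iff proj ξ ω _).2 ⟨m, rfl, hm.1.2⟩
  · rintro k ⟨hk, hmove⟩
    obtain ⟨s, rfl, hs⟩ := (proj_walk2_succ_ne_iff proj ξ ω k).1 hmove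
    have := hm.2 ⟨by omega, hs⟩
    omega

-- `hi` says that the coordinate moves at least `i + 1` times; otherwise `hitTime` takes the
-- junk value `sInf ∅ = 0`.
lemma hitTime_succ {i : ℕ}
    (hi : ∀ hf : (Set.ofPred fun t => proj (ξ t ω) ≠ 0).Finite, i < hf.toFinset.card) :
    hitTime ξ proj (i + 1) ω = Nat.nth (fun t => proj (ξ t ω) ≠ 0) i + 1 := by
  induction i with
  | zero =>
    refine hitTime_succ_eq_of_isLeast proj ξ ω
      ⟨⟨Nat.zero_le _, Nat.nth_mem 0 hi⟩, fun s ⟨_, hs⟩ => ?_⟩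
    exact Nat.nth_zero (p := fun t => proj (ξ t ω) ≠ 0) ▸ Nat.sInf_le hs
  | succ i ih =>
    have hprev := ih fun hf => (hi hf).trans' (Nat.lt_succ_self i)
    have hlt : Nat.nth _ i < Nat.nth _ (i + 1) := Nat.nth_lt_nth' (Nat.lt_succ_self i) hi
    refine hitTime_succ_eq_of_isLeast proj ξ ω
      ⟨⟨by rw [hprev]; omega, Nat.nth_mem _ hi⟩, fun s ⟨hs, hps⟩ => ?_⟩
    rw [hprev] at hs
    by_contra h
    have := Nat.le_nth_of_lt_nth_succ (not_le.1 h) hps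
    omega

lemma hitTime_le_nth {i : ℕ}
    (hi : ∀ hf : (Set.ofPred fun t => proj (ξ t ω) ≠ 0).Finite, i < hf.toFinset.card) :
    hitTime ξ proj i ω ≤ Nat.nth (fun t => proj (ξ t ω) ≠ 0) i := by
  cases i with
  | zero => exact Nat.zero_le _
  | succ i =>
    rw [hitTime_succ proj ξ ω fun hf => (hi hf).trans' (Nat.lt_succ_self i)]
    exact Nat.nth_lt_nth' (Nat.lt_succ_self i) hi

lemma tilXi_succ {i : ℕ}
    (hi : ∀ hf : (Set.ofPred fun t => proj (ξ t ω) ≠ 0).Finite, i < hf.toFinset.card) :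
    tilXi ξ proj (i + 1) ω = proj (ξ (Nat.nth (fun t => proj (ξ t ω) ≠ 0) i) ω) := by
  set m := Nat.nth (fun t => proj (ξ t ω) ≠ 0) i
  have hle := hitTime_le_nth proj ξ ω hi
  have hsucc := hitTime_succ proj ξ ω hi
  rw [tilXi, watched, watched, Nat.add_sub_cancel, hsucc, proj_walk2, proj_walk2,
    ← Finset.sum_Ico_eq_sub _ (by omega)]
  refine Finset.sum_eq_single_of_mem m (Finset.mem_Ico.2 ⟨hle, by omega⟩) fun t ht htm => ?_
  by_contra hmove
  have : hitTime ξ proj (i + 1) ω ≤ t + 1 :=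
    Nat.sInf_le ⟨by have := (Finset.mem_Ico.1 ht).1; omega,
      (proj_walk2_succ_ne_iff proj ξ ω _).2 ⟨t, rfl, hmove⟩⟩
  have := (Finset.mem_Ico.1 ht).2
  omega

lemma ofFn_tilXi {n k : ℕ} (hk : k ≤ Nat.count (fun t => proj (ξ t ω) ≠ 0) n) :
    List.ofFn (fun j : Fin k => tilXi ξ proj (j + 1) ω) = (moves proj (stepList ξ n ω)).take k := by
  refine List.ext_getElem (by simp [length_moves_stepList, hk]) fun i hi _ => ?_
  have hik : i < k := by simpa using hi
  have hin : i < Nat.count (fun t => proj (ξ t ω) ≠ 0) n := by omega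
  rw [List.getElem_ofFn, List.getElem_take, getElem_moves_stepList proj ξ ω hin,
    tilXi_succ proj ξ ω fun hf => hin.trans_le (Nat.count_le_card hf n)]

lemma horizSteps_eq_count (n : ℕ) :
    horizSteps ξ n ω = Nat.count (fun t => (ξ t ω).1 ≠ 0) n := by
  rw [Nat.count_eq_card_filter_range, horizSteps]
  refine Finset.card_nbij' (· - 1) (· + 1) ?_ ?_ ?_ ?_
  · intro k hk
    simp only [Finset.coe_filter, Set.mem_ofPred_eq, Finset.mem_Icc] at hk
    obtain ⟨s, rfl, hs⟩ := (proj_walk2_succ_ne_iff (AddMonoidHom.fst ℤ ℤ) ξ ω k).1 hk.2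
    simp only [Finset.coe_filter, Set.mem_ofPred_eq, Finset.mem_range]
    exact ⟨by omega, hs⟩
  · intro s hs
    simp only [Finset.coe_filter, Set.mem_ofPred_eq, Finset.mem_range] at hs
    simp only [Finset.coe_filter, Set.mem_ofPred_eq, Finset.mem_Icc]
    exact ⟨by omega, (proj_walk2_succ_ne_iff (AddMonoidHom.fst ℤ ℤ) ξ ω _).2 ⟨s, rfl, hs.2⟩⟩
  · intro k hk
    simp only [Finset.coe_filter, Set.mem_ofPred_eq, Finset.mem_Icc] at hk
    simp only; omega
  · intro s _
    simp

lemma horizSteps_eq_length_moves (n : ℕ) :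
    horizSteps ξ n ω = (moves Prod.fst (stepList ξ n ω)).length :=
  (horizSteps_eq_count ξ ω n).trans (length_moves_stepList (AddMonoidHom.fst ℤ ℤ) ξ ω n).symm

end Bridge

lemma ofFn_tilXi_fst {Ω : Type*} {ξ : ℕ → Ω → ℤ × ℤ} {ω : Ω} {n k : ℕ}
    (hk : k ≤ (moves Prod.fst (stepList ξ n ω)).length) :
    List.ofFn (fun j : Fin k => tilXi ξ Prod.fst (j + 1) ω) =
      (moves Prod.fst (stepList ξ n ω)).take k :=
  ofFn_tilXi (AddMonoidHom.fst ℤ ℤ) ξ ω (length_moves_stepList (AddMonoidHom.fst ℤ ℤ) ξ ω n ▸ hk)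

lemma ofFn_tilXi_snd {Ω : Type*} {ξ : ℕ → Ω → ℤ × ℤ} {ω : Ω} {n k : ℕ}
    (hk : k ≤ (moves Prod.snd (stepList ξ n ω)).length) :
    List.ofFn (fun j : Fin k => tilXi ξ Prod.snd (j + 1) ω) =
      (moves Prod.snd (stepList ξ n ω)).take k :=
  ofFn_tilXi (AddMonoidHom.snd ℤ ℤ) ξ ω (length_moves_stepList (AddMonoidHom.snd ℤ ℤ) ξ ω n ▸ hk)

lemma tilXi_eq_and_horizSteps_eq_iff {Ω : Type*} {ξ : ℕ → Ω → ℤ × ℤ} {ω : Ω} {k l n : ℕ}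
    (hkl : k + l = n) (hω : ∀ x ∈ stepList ξ n ω, x ∈ unitSteps) (e : Fin k → ℤ)
    (f : Fin l → ℤ) :
    ((fun j : Fin k => tilXi ξ Prod.fst (j + 1) ω) = e ∧
        (fun j : Fin l => tilXi ξ Prod.snd (j + 1) ω) = f ∧ horizSteps ξ n ω = k) ↔
      moves Prod.fst (stepList ξ n ω) = List.ofFn e ∧
        moves Prod.snd (stepList ξ n ω) = List.ofFn f := by
  have hlen := length_moves_fst_add_snd _ hω
  rw [length_stepList] at hlen
  rw [horizSteps_eq_length_moves]
  constructor
  · rintro ⟨rfl, rfl, hk⟩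
    have hl : (moves Prod.snd (stepList ξ n ω)).length = l := by omega
    exact ⟨by rw [ofFn_tilXi_fst hk.ge, List.take_of_length_le hk.le],
      by rw [ofFn_tilXi_snd hl.ge, List.take_of_length_le hl.le]⟩
  · rintro ⟨h₁, h₂⟩
    have hk : (moves Prod.fst (stepList ξ n ω)).length = k := by rw [h₁, List.length_ofFn]
    have hl : (moves Prod.snd (stepList ξ n ω)).length = l := by rw [h₂, List.length_ofFn]
    refine ⟨List.ofFn_injective ?_, List.ofFn_injective ?_, hk⟩
    · rw [ofFn_tilXi_fst hk.ge, h₁, List.take_of_length_le (by simp)]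
    · rw [ofFn_tilXi_snd hl.ge, h₂, List.take_of_length_le (by simp)]

lemma hitTime_congr {Ω Ω' : Type*} {ξ : ℕ → Ω → ℤ × ℤ} {ξ' : ℕ → Ω' → ℤ × ℤ}
    {proj proj' : ℤ × ℤ → ℤ} {ω : Ω} {ω' : Ω'}
    (h : ∀ t, proj (walk2 ξ t ω) = proj' (walk2 ξ' t ω')) (i : ℕ) :
    hitTime ξ proj i ω = hitTime ξ' proj' i ω' := by
  induction i with
  | zero => rfl
  | succ i ih => simp only [hitTime, ih, h]

lemma tilXi_congr {Ω Ω' : Type*} {ξ : ℕ → Ω → ℤ × ℤ} {ξ' : ℕ → Ω' → ℤ × ℤ}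
    {proj proj' : ℤ × ℤ → ℤ} {ω : Ω} {ω' : Ω'}
    (h : ∀ t, proj (walk2 ξ t ω) = proj' (walk2 ξ' t ω')) (i : ℕ) :
    tilXi ξ proj i ω = tilXi ξ' proj' i ω' := by
  simp only [tilXi, watched, hitTime_congr h, h]

lemma tilXi_swap {Ω : Type*} (ξ : ℕ → Ω → ℤ × ℤ) (i : ℕ) (ω : Ω) :
    tilXi (fun j ω => (ξ j ω).swap) Prod.fst i ω = tilXi ξ Prod.snd i ω :=
  tilXi_congr (fun t => by simp [walk2, Prod.fst_sum, Prod.snd_sum]) i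

def shuffleWeight (μ : ℤ × ℤ → ℝ≥0∞) (n : ℕ) (u v : List ℤ) : ℝ≥0∞ :=
  if u.length + v.length = n then
    n.choose u.length * (u.map fun s => μ (s, 0)).prod * (v.map fun t => μ (0, t)).prod
  else 0

section ShuffleWeight

variable (μ : ℤ × ℤ → ℝ≥0∞) (n : ℕ) (a b : ℤ) (u v : List ℤ)

lemma shuffleWeight_zero : shuffleWeight μ 0 u v = if u = [] ∧ v = [] then 1 else 0 := by
  cases u <;> cases v <;> simp [shuffleWeight]

@[simp] lemma shuffleWeight_succ_nil_nil : shuffleWeight μ (n + 1) [] [] = 0 := by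
  simp [shuffleWeight]

@[simp] lemma shuffleWeight_succ_cons_nil :
    shuffleWeight μ (n + 1) (a :: u) [] = μ (a, 0) * shuffleWeight μ n u [] := by
  by_cases h : u.length = n <;> simp [shuffleWeight, h]

@[simp] lemma shuffleWeight_succ_nil_cons :
    shuffleWeight μ (n + 1) [] (b :: v) = μ (0, b) * shuffleWeight μ n [] v := by
  by_cases h : v.length = n <;> simp [shuffleWeight, h]

@[simp] lemma shuffleWeight_succ_cons_cons :
    shuffleWeight μ (n + 1) (a :: u) (b :: v) =
      μ (a, 0) * shuffleWeight μ n u (b :: v) + μ (0, b) * shuffleWeight μ n (a :: u) v := by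
  by_cases h : u.length + v.length + 1 = n
  · simp only [shuffleWeight, List.length_cons, List.map_cons, List.prod_cons]
    rw [if_pos (by omega), if_pos (by omega), if_pos (by omega), ← h, Nat.choose_succ_succ',
      Nat.cast_add]
    ring
  · simp only [shuffleWeight, List.length_cons]
    rw [if_neg (by omega), if_neg (by omega), if_neg (by omega)]
    simp

end ShuffleWeight

def piWeight {k : ℕ} (w : ℤ → ℝ≥0∞) (A : Set (Fin k → ℤ)) : ℝ≥0∞ :=
  ∑' e : A, ∏ i, w (e.1 i)

lemma piWeight_singleton {k : ℕ} (w : ℤ → ℝ≥0∞) (e : Fin k → ℤ) :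
    piWeight w {e} = ∏ i, w (e i) :=
  tsum_singleton e fun e => ∏ i, w (e i)

lemma tsum_prod_pi (w : ℤ → ℝ≥0∞) (r : ℕ) :
    ∑' f : Fin r → ℤ, ∏ i, w (f i) = (∑' s, w s) ^ r := by
  induction r with
  | zero => simp
  | succ r ih =>
    rw [← (Fin.consEquiv fun _ => ℤ).tsum_eq, pow_succ', ← ih, ENNReal.tsum_prod',
      ← ENNReal.tsum_mul_right]
    refine tsum_congr fun s => ?_
    rw [← ENNReal.tsum_mul_left]
    refine tsum_congr fun f => ?_
    simp [Fin.consEquiv, Fin.prod_univ_succ]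

lemma piWeight_univ (w : ℤ → ℝ≥0∞) (k : ℕ) :
    piWeight w (Set.univ : Set (Fin k → ℤ)) = (∑' s, w s) ^ k := by
  rw [piWeight, tsum_univ (f := fun e : Fin k → ℤ => ∏ i, w (e i)), tsum_prod_pi]

lemma piWeight_castAdd (w : ℤ → ℝ≥0∞) {k : ℕ} (A : Set (Fin k → ℤ)) (r : ℕ) :
    piWeight w {e : Fin (k + r) → ℤ | (fun i => e (Fin.castAdd r i)) ∈ A} =
      piWeight w A * (∑' s, w s) ^ r := by
  rw [piWeight, piWeight,
    _root_.tsum_subtype {e : Fin (k + r) → ℤ | (fun i => e (Fin.castAdd r i)) ∈ A}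
      (fun e => ∏ i, w (e i)), _root_.tsum_subtype A (fun e => ∏ i, w (e i)),
    ← (Fin.appendEquiv k r).tsum_eq, ENNReal.tsum_prod', ← tsum_prod_pi,
    ← ENNReal.tsum_mul_right]
  refine tsum_congr fun e => ?_
  rw [← ENNReal.tsum_mul_left]
  refine tsum_congr fun f => ?_
  by_cases he : e ∈ A
  · simp [Set.indicator_of_mem, he, Fin.appendEquiv, Fin.prod_univ_add]
  · simp [Set.indicator_of_notMem, he, Fin.appendEquiv]

lemma tsum_prod_set_mul {α β : Type*} (A : Set α) (B : Set β) (f : α → ℝ≥0∞) (g : β → ℝ≥0∞) :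
    ∑' p : ↥(A ×ˢ B), f p.1.1 * g p.1.2 = (∑' a : A, f a) * ∑' b : B, g b := by
  rw [← (Equiv.Set.prod A B).symm.tsum_eq]
  change ∑' c : A × B, f c.1 * g c.2 = _
  rw [ENNReal.tsum_prod (f := fun (a : A) (b : B) => f a * g b), ← ENNReal.tsum_mul_right]
  simp_rw [ENNReal.tsum_mul_left]

lemma prod_comp_sign {M : Type*} [CommMonoid M] {k : ℕ} (ε : Fin k → ℤ)
    (hε : ∀ j, ε j = 1 ∨ ε j = -1) (f : ℤ → M) :
    ∏ j, f (ε j) = f 1 ^ (Finset.univ.filter fun j => ε j = 1).card *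
      f (-1) ^ (k - (Finset.univ.filter fun j => ε j = 1).card) := by
  rw [← Finset.prod_filter_mul_prod_filter_not Finset.univ (fun j => ε j = 1)]
  congr 1
  · exact (Finset.prod_congr rfl fun j hj => congrArg f (Finset.mem_filter.1 hj).2).trans
      (Finset.prod_const _)
  · rw [Finset.prod_congr rfl fun j hj =>
        congrArg f ((hε j).resolve_left (Finset.mem_filter.1 hj).2),
      Finset.prod_const, Finset.filter_not, Finset.card_sdiff_of_subset (Finset.filter_subset _ _),
      Finset.card_univ, Fintype.card_fin]

lemma ofReal_div_pow_mul_div_pow_mul_pow {p q : ℝ} (hp : 0 < p) (hq : 0 < q) {i k : ℕ}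
    (hik : i ≤ k) :
    ENNReal.ofReal ((p / (p + q)) ^ i * (q / (p + q)) ^ (k - i) * (p + q) ^ k) =
      ENNReal.ofReal p ^ i * ENNReal.ofReal q ^ (k - i) := by
  have hk : (p + q) ^ k = (p + q) ^ i * (p + q) ^ (k - i) := by
    rw [← pow_add, Nat.add_sub_cancel' hik]
  rw [hk, div_pow, div_pow, show p ^ i / (p + q) ^ i * (q ^ (k - i) / (p + q) ^ (k - i)) *
      ((p + q) ^ i * (p + q) ^ (k - i)) = p ^ i * q ^ (k - i) by field_simp,
    ENNReal.ofReal_mul (by positivity), ENNReal.ofReal_pow hp.le, ENNReal.ofReal_pow hq.le]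

lemma sum_unitSteps {M : Type*} [AddCommMonoid M] (f : ℤ × ℤ → M) :
    ∑ x ∈ unitSteps, f x = f (1, 0) + f (-1, 0) + f (0, 1) + f (0, -1) := by
  simp [unitSteps, add_assoc]

lemma measure_inter_biUnion_finset {Ω ι : Type*} [MeasurableSpace Ω] (P : Measure Ω) (X : Set Ω)
    {s : Finset ι} {S : ι → Set Ω} (hd : Set.PairwiseDisjoint (↑s) S)
    (hm : ∀ i ∈ s, MeasurableSet (S i)) :
    P (X ∩ ⋃ i ∈ s, S i) = ∑ i ∈ s, P (X ∩ S i) := by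
  rw [Set.inter_comm, ← Measure.restrict_apply (Finset.measurableSet_biUnion s hm),
    measure_biUnion_finset hd hm]
  exact Finset.sum_congr rfl fun i hi => by rw [Measure.restrict_apply (hm i hi), Set.inter_comm]

structure IsUnitStepWalk {Ω : Type*} [MeasurableSpace Ω] (P : Measure Ω) (ξ : ℕ → Ω → ℤ × ℤ)
    (μ : ℤ × ℤ → ℝ≥0∞) : Prop where
  measurable (j : ℕ) : Measurable (ξ j)
  indep : iIndepFun ξ P
  measure_eq (j : ℕ) (x : ℤ × ℤ) : P {ω | ξ j ω = x} = μ x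
  ae_mem (j : ℕ) : ∀ᵐ ω ∂P, ξ j ω ∈ unitSteps

namespace IsUnitStepWalk

variable {Ω : Type*} [MeasurableSpace Ω] {P : Measure Ω} {ξ : ℕ → Ω → ℤ × ℤ}
  {μ : ℤ × ℤ → ℝ≥0∞}

lemma shift (hξ : IsUnitStepWalk P ξ μ) : IsUnitStepWalk P (fun j => ξ (j + 1)) μ :=
  ⟨fun _ => hξ.measurable _, hξ.indep.precomp (add_left_injective 1),
    fun _ => hξ.measure_eq _, fun _ => hξ.ae_mem _⟩

lemma swap (hξ : IsUnitStepWalk P ξ μ) :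
    IsUnitStepWalk P (fun j ω => (ξ j ω).swap) (fun x => μ x.swap) where
  measurable j := measurable_swap.comp (hξ.measurable j)
  indep := hξ.indep.comp _ fun _ => measurable_swap
  measure_eq j x := by simpa [Prod.swap_eq_iff_eq_swap] using hξ.measure_eq j x.swap
  ae_mem j := (hξ.ae_mem j).mono fun ω h => by simp only [unitSteps] at h ⊢; aesop

lemma apply_eq_zero (hξ : IsUnitStepWalk P ξ μ) {x : ℤ × ℤ} (hx : x ∉ unitSteps) : μ x = 0 := by
  rw [← hξ.measure_eq 0 x]
  refine measure_mono_null (fun ω (h : ξ 0 ω = x) => ?_) (ae_iff.1 (hξ.ae_mem 0))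
  simpa [Set.mem_ofPred_eq, h] using hx

-- The disequalities are oriented as `1 ≠ a` so that `simp` can use them after `List.cons.injEq`.
lemma sign_cases_fst (hξ : IsUnitStepWalk P ξ μ) (a : ℤ) :
    a = 1 ∨ a = -1 ∨ (1 ≠ a ∧ -1 ≠ a ∧ μ (a, 0) = 0) := by
  by_cases h1 : a = 1; · exact Or.inl h1
  by_cases h2 : a = -1; · exact Or.inr (Or.inl h2)
  exact Or.inr (Or.inr
    ⟨Ne.symm h1, Ne.symm h2, hξ.apply_eq_zero (by simp [unitSteps, h1, h2])⟩)

lemma sign_cases_snd (hξ : IsUnitStepWalk P ξ μ) (b : ℤ) :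
    b = 1 ∨ b = -1 ∨ (1 ≠ b ∧ -1 ≠ b ∧ μ (0, b) = 0) :=
  hξ.swap.sign_cases_fst b

lemma tsum_fst (hξ : IsUnitStepWalk P ξ μ) : ∑' s, μ (s, 0) = μ (1, 0) + μ (-1, 0) := by
  rw [tsum_eq_sum (s := {1, -1}) fun s hs => hξ.apply_eq_zero (by simp_all [unitSteps]),
    Finset.sum_pair (by norm_num)]

theorem of_measure_eq [IsProbabilityMeasure P] (hmeas : ∀ j, Measurable (ξ j))
    (hindep : iIndepFun ξ P) (hsum : ∑ x ∈ unitSteps, P {ω | ξ 0 ω = x} = 1)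
    (hlaw : ∀ j, ∀ x ∈ unitSteps, P {ω | ξ j ω = x} = P {ω | ξ 0 ω = x}) :
    IsUnitStepWalk P ξ fun x => P {ω | ξ 0 ω = x} := by
  have hae (j : ℕ) : ∀ᵐ ω ∂P, ξ j ω ∈ unitSteps := by
    rw [ae_iff]
    change P (ξ j ⁻¹' ↑unitSteps)ᶜ = 0
    rw [prob_compl_eq_zero_iff (hmeas j MeasurableSet.of_discrete),
      ← sum_measure_preimage_singleton _ fun x _ => hmeas j (measurableSet_singleton x)]
    exact (Finset.sum_congr rfl (hlaw j)).trans hsum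
  refine ⟨hmeas, hindep, fun j x => ?_, hae⟩
  by_cases hx : x ∈ unitSteps
  · exact hlaw j x hx
  · have hnull (i : ℕ) : P {ω | ξ i ω = x} = 0 :=
      measure_mono_null (fun ω (h : ξ i ω = x) => by simpa [h] using hx) (ae_iff.1 (hae i))
    rw [hnull, hnull]

lemma ae_forall_mem_stepList (hξ : IsUnitStepWalk P ξ μ) (n : ℕ) :
    ∀ᵐ ω ∂P, ∀ x ∈ stepList ξ n ω, x ∈ unitSteps := by
  filter_upwards [ae_all_iff.2 hξ.ae_mem] with ω hω
  simp [stepList, List.mem_ofFn, hω]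

lemma measurableSet_stepList (hξ : IsUnitStepWalk P ξ μ) (n : ℕ) (S : Set (List (ℤ × ℤ))) :
    MeasurableSet {ω | stepList ξ n ω ∈ S} :=
  (measurable_pi_lambda (fun ω (j : Fin n) => ξ j ω) fun j => hξ.measurable j)
    (MeasurableSet.of_discrete (s := {g : Fin n → ℤ × ℤ | List.ofFn g ∈ S}))

lemma measurableSet_horizSteps (hξ : IsUnitStepWalk P ξ μ) (n : ℕ) (S : Set ℕ) :
    MeasurableSet {ω | horizSteps ξ n ω ∈ S} := by
  simp_rw [horizSteps_eq_length_moves]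
  exact hξ.measurableSet_stepList n {L | (moves Prod.fst L).length ∈ S}

lemma indepFun_head_tail (hξ : IsUnitStepWalk P ξ μ) (n : ℕ) :
    IndepFun (ξ 0) (fun ω (j : Fin n) => ξ (j + 1) ω) P := by
  have h := hξ.indep.indepFun_finset {0} (Finset.Icc 1 n) (by simp) hξ.measurable
  exact h.comp (measurable_pi_apply ⟨0, Finset.mem_singleton_self 0⟩)
    (measurable_pi_lambda (fun g (j : Fin n) => g ⟨j + 1, by simp⟩) fun j => measurable_pi_apply _)

lemma measure_head_inter (hξ : IsUnitStepWalk P ξ μ) (n : ℕ) (x : ℤ × ℤ)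
    (S : Set (List (ℤ × ℤ))) :
    P {ω | ξ 0 ω = x ∧ stepList (fun j => ξ (j + 1)) n ω ∈ S} =
      μ x * P {ω | stepList (fun j => ξ (j + 1)) n ω ∈ S} := by
  rw [← hξ.measure_eq 0 x]
  exact (hξ.indepFun_head_tail n).measure_inter_preimage_eq_mul {x}
    {g | List.ofFn g ∈ S} (MeasurableSet.of_discrete) (MeasurableSet.of_discrete)

lemma measure_stepList_succ (hξ : IsUnitStepWalk P ξ μ) (n : ℕ) (S : Set (List (ℤ × ℤ))) :
    P {ω | stepList ξ (n + 1) ω ∈ S} =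
      ∑ x ∈ unitSteps, μ x * P {ω | x :: stepList (fun j => ξ (j + 1)) n ω ∈ S} := by
  have hae : {ω | stepList ξ (n + 1) ω ∈ S} =ᵐ[P]
      ⋃ x ∈ unitSteps, {ω | ξ 0 ω = x ∧ stepList (fun j => ξ (j + 1)) n ω ∈ {l | x :: l ∈ S}} := by
    refine eventuallyEq_set.2 ((hξ.ae_mem 0).mono fun ω hω => ?_)
    simp only [Set.mem_iUnion, Set.mem_ofPred_eq, stepList_succ', exists_prop]
    exact ⟨fun h => ⟨_, hω, rfl, h⟩, fun ⟨x, _, hx, h⟩ => hx ▸ h⟩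
  rw [measure_congr hae, measure_biUnion_finset]
  · exact Finset.sum_congr rfl fun x _ => hξ.measure_head_inter n x _
  · intro x _ y _ hxy
    exact Set.disjoint_left.2 fun ω hx hy => hxy (hx.1.symm.trans hy.1)
  · exact fun x _ => (hξ.measurable 0 (measurableSet_singleton x)).inter
      (hξ.shift.measurableSet_stepList n {l | x :: l ∈ S})

theorem measure_moves_eq [IsProbabilityMeasure P] (hξ : IsUnitStepWalk P ξ μ) (n : ℕ)
    (u v : List ℤ) :
    P {ω | moves Prod.fst (stepList ξ n ω) = u ∧ moves Prod.snd (stepList ξ n ω) = v} =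
      shuffleWeight μ n u v := by
  induction n generalizing ξ u v with
  | zero => cases u <;> cases v <;> simp [stepList, shuffleWeight_zero]
  | succ n ih =>
    -- Condition on the first step; the simp lemmas `shuffleWeight_succ_*` are Pascal's rule.
    refine (hξ.measure_stepList_succ n {l | moves Prod.fst l = u ∧ moves Prod.snd l = v}).trans ?_
    simp only [sum_unitSteps, Set.mem_ofPred_eq, moves_cons]
    have ih' := ih hξ.shift
    cases u with
    | nil =>
      cases v with
      | nil => simp
      | cons b v =>
        rcases hξ.sign_cases_snd b with rfl | rfl | ⟨hb1, hb2, hb⟩ <;>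
          simp [*]
    | cons a u =>
      cases v with
      | nil =>
        rcases hξ.sign_cases_fst a with rfl | rfl | ⟨ha1, ha2, ha⟩ <;>
          simp [*]
      | cons b v =>
        rcases hξ.sign_cases_fst a with rfl | rfl | ⟨ha1, ha2, ha⟩ <;>
        rcases hξ.sign_cases_snd b with rfl | rfl | ⟨hb1, hb2, hb⟩ <;>
          simp [*]

theorem measure_tilXi_mem_inter [IsProbabilityMeasure P] (hξ : IsUnitStepWalk P ξ μ)
    {k l n : ℕ} (hkl : k + l = n) (A : Set (Fin k → ℤ)) (B : Set (Fin l → ℤ)) :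
    P ({ω | (fun j : Fin k => tilXi ξ Prod.fst (j + 1) ω) ∈ A} ∩
        {ω | (fun j : Fin l => tilXi ξ Prod.snd (j + 1) ω) ∈ B} ∩
        {ω | horizSteps ξ n ω = k}) =
      n.choose k * piWeight (fun s => μ (s, 0)) A * piWeight (fun t => μ (0, t)) B := by
  set E : (Fin k → ℤ) × (Fin l → ℤ) → Set Ω := fun p =>
    {ω | moves Prod.fst (stepList ξ n ω) = List.ofFn p.1 ∧
      moves Prod.snd (stepList ξ n ω) = List.ofFn p.2}
  have hae : ({ω | (fun j : Fin k => tilXi ξ Prod.fst (j + 1) ω) ∈ A} ∩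
      {ω | (fun j : Fin l => tilXi ξ Prod.snd (j + 1) ω) ∈ B} ∩
      {ω | horizSteps ξ n ω = k} : Set Ω) =ᵐ[P] (⋃ p ∈ A ×ˢ B, E p : Set Ω) := by
    refine eventuallyEq_set.2 ((hξ.ae_forall_mem_stepList n).mono fun ω hω => ?_)
    simp only [Set.mem_inter_iff, Set.mem_ofPred_eq, Set.mem_iUnion, Set.mem_prod, exists_prop,
      Prod.exists, E]
    constructor
    · rintro ⟨⟨hA, hB⟩, hH⟩
      exact ⟨_, _, ⟨hA, hB⟩, (tilXi_eq_and_horizSteps_eq_iff hkl hω _ _).1 ⟨rfl, rfl, hH⟩⟩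
    · rintro ⟨e, f, ⟨he, hf⟩, h⟩
      obtain ⟨rfl, rfl, hH⟩ := (tilXi_eq_and_horizSteps_eq_iff hkl hω e f).2 h
      exact ⟨⟨he, hf⟩, hH⟩
  rw [measure_congr hae, measure_biUnion (Set.to_countable _)]
  · calc ∑' p : ↥(A ×ˢ B), P (E p)
        = ∑' p : ↥(A ×ˢ B), (n.choose k * ∏ i, μ (p.1.1 i, 0)) * ∏ j, μ (0, p.1.2 j) := by
          refine tsum_congr fun p => ?_
          rw [hξ.measure_moves_eq, shuffleWeight, if_pos (by simp [hkl])]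
          simp [List.prod_ofFn]
      _ = n.choose k * piWeight (fun s => μ (s, 0)) A * piWeight (fun t => μ (0, t)) B := by
          rw [tsum_prod_set_mul A B (fun e => n.choose k * ∏ i, μ (e i, 0))
            (fun f => ∏ j, μ (0, f j)), ENNReal.tsum_mul_left, piWeight, piWeight]
  · intro p _ q _ hpq
    refine Set.disjoint_left.2 fun ω hp hq => hpq ?_
    exact Prod.ext (List.ofFn_injective (hp.1.symm.trans hq.1))
      (List.ofFn_injective (hp.2.symm.trans hq.2))
  · exact fun p _ => hξ.measurableSet_stepList n
      {L | moves Prod.fst L = List.ofFn p.1 ∧ moves Prod.snd L = List.ofFn p.2}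

theorem measure_tilXi_eq [IsProbabilityMeasure P] (hξ : IsUnitStepWalk P ξ μ) {k l n : ℕ}
    (hkl : k + l = n) (ε : Fin k → ℤ) (η : Fin l → ℤ) :
    P {ω | (∀ j : Fin k, tilXi ξ Prod.fst ((j : ℕ) + 1) ω = ε j) ∧
        (∀ j : Fin l, tilXi ξ Prod.snd ((j : ℕ) + 1) ω = η j) ∧ horizSteps ξ n ω = k} =
      n.choose k * (∏ j, μ (ε j, 0)) * ∏ j, μ (0, η j) := by
  have hset : {ω | (∀ j : Fin k, tilXi ξ Prod.fst ((j : ℕ) + 1) ω = ε j) ∧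
      (∀ j : Fin l, tilXi ξ Prod.snd ((j : ℕ) + 1) ω = η j) ∧ horizSteps ξ n ω = k} =
      {ω | (fun j : Fin k => tilXi ξ Prod.fst (j + 1) ω) ∈ ({ε} : Set _)} ∩
        {ω | (fun j : Fin l => tilXi ξ Prod.snd (j + 1) ω) ∈ ({η} : Set _)} ∩
        {ω | horizSteps ξ n ω = k} := by
    ext ω
    simp [funext_iff, and_assoc]
  rw [hset, hξ.measure_tilXi_mem_inter hkl, piWeight_singleton, piWeight_singleton]

theorem measure_horizSteps_eq [IsProbabilityMeasure P] (hξ : IsUnitStepWalk P ξ μ)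
    {k l n : ℕ} (hkl : k + l = n) :
    P {ω | horizSteps ξ n ω = k} = n.choose k * (∑' s, μ (s, 0)) ^ k * (∑' t, μ (0, t)) ^ l := by
  simpa [piWeight_univ] using hξ.measure_tilXi_mem_inter hkl Set.univ Set.univ

lemma measure_fst_eq_zero (hξ : IsUnitStepWalk P ξ μ) (j : ℕ) :
    P {ω | (ξ j ω).1 = 0} = μ (0, 1) + μ (0, -1) := by
  have hae : {ω | (ξ j ω).1 = 0} =ᵐ[P] ({ω | ξ j ω = (0, 1)} ∪ {ω | ξ j ω = (0, -1)} : Set Ω) := by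
    refine eventuallyEq_set.2 ((hξ.ae_mem j).mono fun ω hω => ?_)
    simp only [unitSteps, Finset.mem_insert, Finset.mem_singleton] at hω
    rcases hω with h | h | h | h <;> simp [h]
  rw [measure_congr hae, measure_union (s₂ := {ω | ξ j ω = (0, -1)}) ?_
    (hξ.measurable j (measurableSet_singleton _)), hξ.measure_eq, hξ.measure_eq]
  exact Set.disjoint_left.2 fun ω h₁ h₂ => by simp_all

lemma ae_exists_le_horizSteps (hξ : IsUnitStepWalk P ξ μ) (hμ : μ (0, 1) + μ (0, -1) < 1)
    (k : ℕ) : ∀ᵐ ω ∂P, ∃ N, k ≤ horizSteps ξ N ω := by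
  -- With finitely many horizontal steps, all steps from some `m` on are vertical, an event of
  -- probability at most `(μ (0, 1) + μ (0, -1)) ^ L` for every `L`.
  have hsub : {ω | ¬ ∃ N, k ≤ horizSteps ξ N ω} ⊆ ⋃ m, ⋂ j, {ω | (ξ (m + j) ω).1 = 0} := by
    intro ω hω
    simp only [Set.mem_ofPred_eq, not_exists, not_le] at hω
    have hfin : (Set.ofPred fun t => (ξ t ω).1 ≠ 0).Finite := by
      by_contra hinf
      have h := hω (Nat.nth (fun t => (ξ t ω).1 ≠ 0) k + 1)
      rw [horizSteps_eq_count, Nat.count_succ, Nat.count_nth_of_infinite hinf,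
        if_pos (Nat.nth_mem_of_infinite hinf k)] at h
      omega
    obtain ⟨m, hm⟩ := hfin.bddAbove
    simp only [Set.mem_iUnion, Set.mem_iInter, Set.mem_ofPred_eq]
    exact ⟨m + 1, fun j => by_contra fun h => by have := hm h; omega⟩
  have hnull (m : ℕ) : P (⋂ j, {ω | (ξ (m + j) ω).1 = 0}) = 0 := by
    refine le_antisymm (ge_of_tendsto' (ENNReal.tendsto_pow_atTop_nhds_zero_of_lt_one hμ)
      fun L => ?_) bot_le
    calc P (⋂ j, {ω | (ξ (m + j) ω).1 = 0})
        ≤ P (⋂ j ∈ Finset.range L, {ω | (ξ (m + j) ω).1 = 0}) :=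
          measure_mono fun ω hω => Set.mem_iInter₂.2 fun j _ => Set.mem_iInter.1 hω j
      _ = ∏ j ∈ Finset.range L, P {ω | (ξ (m + j) ω).1 = 0} :=
          (hξ.indep.precomp (add_right_injective m)).meas_biInter fun j _ =>
            ⟨{x | x.1 = 0}, MeasurableSet.of_discrete, rfl⟩
      _ = (μ (0, 1) + μ (0, -1)) ^ L := by simp [hξ.measure_fst_eq_zero]
  exact ae_iff.2 (measure_mono_null hsub (measure_iUnion_null hnull))

lemma measure_tilXi_fst_mem_inter_horizSteps_eq [IsProbabilityMeasure P]
    (hξ : IsUnitStepWalk P ξ μ) {k r N : ℕ} (h : k + r ≤ N) (A : Set (Fin k → ℤ)) :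
    P ({ω | (fun j : Fin k => tilXi ξ Prod.fst (j + 1) ω) ∈ A} ∩
        {ω | horizSteps ξ N ω = k + r}) * (∑' s, μ (s, 0)) ^ k =
      piWeight (fun s => μ (s, 0)) A * P {ω | horizSteps ξ N ω = k + r} := by
  have hset : {ω | (fun j : Fin k => tilXi ξ Prod.fst (j + 1) ω) ∈ A} ∩
      {ω | horizSteps ξ N ω = k + r} =
      {ω | (fun j : Fin (k + r) => tilXi ξ Prod.fst (j + 1) ω) ∈
          {e : Fin (k + r) → ℤ | (fun i => e (Fin.castAdd r i)) ∈ A}} ∩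
        {ω | (fun j : Fin (N - (k + r)) => tilXi ξ Prod.snd (j + 1) ω) ∈ Set.univ} ∩
        {ω | horizSteps ξ N ω = k + r} := by
    ext ω
    simp [Fin.castAdd]
  rw [hset, hξ.measure_tilXi_mem_inter (by omega),
    hξ.measure_horizSteps_eq (l := N - (k + r)) (by omega), piWeight_castAdd, piWeight_univ]
  ring

lemma measure_tilXi_fst_mem_inter_le_horizSteps [IsProbabilityMeasure P]
    (hξ : IsUnitStepWalk P ξ μ) (k N : ℕ) (A : Set (Fin k → ℤ)) :
    P ({ω | (fun j : Fin k => tilXi ξ Prod.fst (j + 1) ω) ∈ A} ∩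
        {ω | k ≤ horizSteps ξ N ω}) * (∑' s, μ (s, 0)) ^ k =
      piWeight (fun s => μ (s, 0)) A * P {ω | k ≤ horizSteps ξ N ω} := by
  have hS : {ω | k ≤ horizSteps ξ N ω} =
      ⋃ r ∈ Finset.range (N + 1 - k), {ω | horizSteps ξ N ω = k + r} := by
    ext ω
    have := (horizSteps_eq_count ξ ω N).trans_le (Nat.count_le _)
    simp only [Set.mem_ofPred_eq, Set.mem_iUnion, Finset.mem_range, exists_prop]
    exact ⟨fun h => ⟨horizSteps ξ N ω - k, by omega, by omega⟩, fun ⟨r, _, hr⟩ => by omega⟩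
  have hdisj : Set.PairwiseDisjoint ↑(Finset.range (N + 1 - k))
      fun r => {ω | horizSteps ξ N ω = k + r} := fun r _ r' _ hrr' =>
    Set.disjoint_left.2 fun ω h h' => hrr' (by simp only [Set.mem_ofPred_eq] at h h'; omega)
  have hmeas (r : ℕ) : MeasurableSet {ω | horizSteps ξ N ω = k + r} :=
    hξ.measurableSet_horizSteps N {k + r}
  rw [hS, measure_inter_biUnion_finset P _ hdisj fun r _ => hmeas r,
    measure_biUnion_finset hdisj fun r _ => hmeas r, Finset.sum_mul, Finset.mul_sum]
  exact Finset.sum_congr rfl fun r hr =>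
    hξ.measure_tilXi_fst_mem_inter_horizSteps_eq (by simp at hr; omega) A

theorem measure_tilXi_fst_mem_mul [IsProbabilityMeasure P] (hξ : IsUnitStepWalk P ξ μ)
    (hμ : μ (0, 1) + μ (0, -1) < 1) (k : ℕ) (A : Set (Fin k → ℤ)) :
    P {ω | (fun j : Fin k => tilXi ξ Prod.fst (j + 1) ω) ∈ A} * (∑' s, μ (s, 0)) ^ k =
      piWeight (fun s => μ (s, 0)) A := by
  set X := {ω | (fun j : Fin k => tilXi ξ Prod.fst (j + 1) ω) ∈ A}
  set S : ℕ → Set Ω := fun N => {ω | k ≤ horizSteps ξ N ω}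
  have hmono : Monotone S := fun N N' h ω (hω : k ≤ horizSteps ξ N ω) =>
    hω.trans (by rw [horizSteps_eq_count, horizSteps_eq_count]; exact Nat.count_monotone _ h)
  have hcover : P (⋃ N, S N)ᶜ = 0 := by
    convert ae_iff.1 (hξ.ae_exists_le_horizSteps hμ k) using 2
    ext ω
    simp [S]
  have hX : Tendsto (fun N => P (X ∩ S N)) atTop (𝓝 (P X)) := by
    have := tendsto_measure_iUnion_atTop (μ := P)
      (fun N N' h => Set.inter_subset_inter_right X (hmono h))
    rwa [← Set.inter_iUnion, measure_inter_conull hcover] at this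
  have hone : Tendsto (fun N => P (S N)) atTop (𝓝 1) := by
    have := tendsto_measure_iUnion_atTop (μ := P) hmono
    rwa [measure_congr (ae_eq_univ.2 hcover), measure_univ] at this
  have hfin : (∑' s, μ (s, 0)) ^ k ≠ ⊤ := by
    rw [hξ.tsum_fst, ← hξ.measure_eq 0, ← hξ.measure_eq 0]
    exact ENNReal.pow_ne_top (ENNReal.add_ne_top.2 ⟨measure_ne_top _ _, measure_ne_top _ _⟩)
  refine tendsto_nhds_unique (ENNReal.Tendsto.mul_const hX (Or.inr hfin)) ?_
  simp_rw [X, S, hξ.measure_tilXi_fst_mem_inter_le_horizSteps]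
  simpa using ENNReal.Tendsto.const_mul hone (Or.inl one_ne_zero)

theorem measure_tilXi_snd_mem_mul [IsProbabilityMeasure P] (hξ : IsUnitStepWalk P ξ μ)
    (hμ : μ (1, 0) + μ (-1, 0) < 1) (l : ℕ) (B : Set (Fin l → ℤ)) :
    P {ω | (fun j : Fin l => tilXi ξ Prod.snd (j + 1) ω) ∈ B} * (∑' t, μ (0, t)) ^ l =
      piWeight (fun t => μ (0, t)) B := by
  simpa only [tilXi_swap, Prod.swap_prod_mk] using hξ.swap.measure_tilXi_fst_mem_mul hμ l B

theorem measure_inter_eq_mul [IsProbabilityMeasure P] (hξ : IsUnitStepWalk P ξ μ)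
    (hμ₁ : μ (1, 0) + μ (-1, 0) < 1) (hμ₂ : μ (0, 1) + μ (0, -1) < 1)
    {k l n : ℕ} (hkl : k + l = n) (A : Set (Fin k → ℤ)) (B : Set (Fin l → ℤ)) :
    P ({ω | (fun j : Fin k => tilXi ξ Prod.fst (j + 1) ω) ∈ A} ∩
        {ω | (fun j : Fin l => tilXi ξ Prod.snd (j + 1) ω) ∈ B} ∩
        {ω | horizSteps ξ n ω = k}) =
      P {ω | (fun j : Fin k => tilXi ξ Prod.fst (j + 1) ω) ∈ A} *
        P {ω | (fun j : Fin l => tilXi ξ Prod.snd (j + 1) ω) ∈ B} *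
        P {ω | horizSteps ξ n ω = k} := by
  rw [hξ.measure_tilXi_mem_inter hkl, hξ.measure_horizSteps_eq hkl,
    ← hξ.measure_tilXi_fst_mem_mul hμ₂, ← hξ.measure_tilXi_snd_mem_mul hμ₁]
  ring

end IsUnitStepWalk

/-- Shuffling lemma: the joint probability of prescribed values for the first `k` watched
horizontal increments, the first `n-k` watched vertical increments, and `H_n = k`
factorises as `p̃₁^I q̃₁^{k-I} p̃₂^J q̃₂^{(n-k)-J} C(n,k) h₁^k h₂^{n-k}`; consequently the two
watched increment vectors and the event `{H_n = k}` are independent. -/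
theorem stmt6 {Ω : Type*} [MeasurableSpace Ω] (P : Measure Ω) [IsProbabilityMeasure P]
    (ξ : ℕ → Ω → ℤ × ℤ) (hmeas : ∀ k, Measurable (ξ k))
    (hindep : iIndepFun ξ P)
    (p₁ q₁ p₂ q₂ h₁ h₂ : ℝ)
    (hp₁ : 0 < p₁) (hq₁ : 0 < q₁) (hp₂ : 0 < p₂) (hq₂ : 0 < q₂)
    (hsum : p₁ + q₁ + p₂ + q₂ = 1)
    (hh₁ : h₁ = p₁ + q₁) (hh₂ : h₂ = p₂ + q₂)
    (hd₁ : ∀ k, P {ω | ξ k ω = (1, 0)} = ENNReal.ofReal p₁)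
    (hd₂ : ∀ k, P {ω | ξ k ω = (-1, 0)} = ENNReal.ofReal q₁)
    (hd₃ : ∀ k, P {ω | ξ k ω = (0, 1)} = ENNReal.ofReal p₂)
    (hd₄ : ∀ k, P {ω | ξ k ω = (0, -1)} = ENNReal.ofReal q₂)
    (n k : ℕ) (hk : k ≤ n)
    (ε : Fin k → ℤ) (η : Fin (n - k) → ℤ)
    (hε : ∀ j, ε j = 1 ∨ ε j = -1) (hη : ∀ j, η j = 1 ∨ η j = -1)
    (I J : ℕ)
    (hI : I = (Finset.univ.filter (fun j => ε j = 1)).card)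
    (hJ : J = (Finset.univ.filter (fun j => η j = 1)).card) :
    P {ω | (∀ j : Fin k, tilXi ξ Prod.fst ((j : ℕ) + 1) ω = ε j) ∧
           (∀ j : Fin (n - k), tilXi ξ Prod.snd ((j : ℕ) + 1) ω = η j) ∧
           horizSteps ξ n ω = k}
      = ENNReal.ofReal
          ((p₁ / h₁) ^ I * (q₁ / h₁) ^ (k - I) * (p₂ / h₂) ^ J * (q₂ / h₂) ^ (n - k - J) *
            (n.choose k) * h₁ ^ k * h₂ ^ (n - k)) ∧
    ∀ (A : Set (Fin k → ℤ)) (B : Set (Fin (n - k) → ℤ)),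
      P ({ω | (fun j : Fin k => tilXi ξ Prod.fst ((j : ℕ) + 1) ω) ∈ A} ∩
         {ω | (fun j : Fin (n - k) => tilXi ξ Prod.snd ((j : ℕ) + 1) ω) ∈ B} ∩
         {ω | horizSteps ξ n ω = k})
        = P {ω | (fun j : Fin k => tilXi ξ Prod.fst ((j : ℕ) + 1) ω) ∈ A} *
          P {ω | (fun j : Fin (n - k) => tilXi ξ Prod.snd ((j : ℕ) + 1) ω) ∈ B} *
          P {ω | horizSteps ξ n ω = k} := by
  subst hh₁ hh₂
  have hξ : IsUnitStepWalk P ξ fun x => P {ω | ξ 0 ω = x} := by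
    refine IsUnitStepWalk.of_measure_eq hmeas hindep ?_ fun j x hx => ?_
    · rw [sum_unitSteps, hd₁, hd₂, hd₃, hd₄, ← ENNReal.ofReal_add hp₁.le hq₁.le,
        ← ENNReal.ofReal_add (by positivity) hp₂.le, ← ENNReal.ofReal_add (by positivity) hq₂.le,
        hsum, ENNReal.ofReal_one]
    · simp only [unitSteps, Finset.mem_insert, Finset.mem_singleton] at hx
      rcases hx with rfl | rfl | rfl | rfl <;> simp only [hd₁, hd₂, hd₃, hd₄]
  have hnk : k + (n - k) = n := Nat.add_sub_cancel' hk
  refine ⟨?_, fun A B => hξ.measure_inter_eq_mul ?_ ?_ hnk A B⟩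
  · have hIk : I ≤ k := hI ▸ (Finset.card_filter_le _ _).trans_eq (Finset.card_fin k)
    have hJl : J ≤ n - k := hJ ▸ (Finset.card_filter_le _ _).trans_eq (Finset.card_fin _)
    rw [hξ.measure_tilXi_eq hnk, prod_comp_sign ε hε fun s => P {ω | ξ 0 ω = (s, 0)},
      prod_comp_sign η hη fun t => P {ω | ξ 0 ω = (0, t)}, ← hI, ← hJ, hd₁, hd₂, hd₃, hd₄,
      ← ofReal_div_pow_mul_div_pow_mul_pow hp₁ hq₁ hIk,
      ← ofReal_div_pow_mul_div_pow_mul_pow hp₂ hq₂ hJl, ← ENNReal.ofReal_natCast,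
      ← ENNReal.ofReal_mul (by positivity), ← ENNReal.ofReal_mul (by positivity)]
    congr 1
    ring
  · rw [hd₁, hd₂, ← ENNReal.ofReal_add hp₁.le hq₁.le]
    exact ENNReal.ofReal_lt_one.2 (by linarith)
  · rw [hd₃, hd₄, ← ENNReal.ofReal_add hp₂.le hq₂.le]
    exact ENNReal.ofReal_lt_one.2 (by linarith)

end
end

section
/- Let 0 ≤ α < h < β ≤ 1, let a ∈ ℕ with a ≥ 1 and b ∈ ℕ be fixed, and let f : [α, β] → ℝ be continuous. Then lim_{n→∞} Σ_{k : αn ≤ k ≤ βn, k ≡ b (mod a)} f(k/n) · C(n,k) h^k (1−h)^{n−k} = f(h)/a, where C(n,k) denotes the binomial coefficient. -/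
/-!
Let `P n k = C(n,k) h^k (1-h)^(n-k)`. By Chebyshev (the binomial variance is `h(1-h)/n`), the
weights concentrate at `k/n ≈ h`, so for any `F` bounded and continuous at `h`,
`Σ_{k ∈ S} F(k/n) P n k - F(h) Σ_{k ∈ S} P n k → 0` for every set `S` of indices. With
`F = 1_{[α,β]} f` it remains to see that the residue class `k ≡ b (mod a)` carries mass `→ 1/a`.
The roots-of-unity filter gives `a Σ_{k ≡ b} P n k = Σ_{j < a} ζ^{-bj} (1 - h + h ζ^j)^n` for a
primitive `a`-th root `ζ`, and for `j ≠ 0` strict convexity of the unit disc gives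
`|1 - h + h ζ^j| < 1` since `0 < h < 1`, so only the `j = 0` term survives.
-/

open Filter Topology Finset

open scoped Classical

def binomWeight {R : Type*} [CommRing R] (x : R) (n k : ℕ) : R :=
  n.choose k * x ^ k * (1 - x) ^ (n - k)

section binomWeight

variable {R : Type*} [CommRing R]

theorem eval_bernsteinPolynomial (x : R) (n k : ℕ) :
    (bernsteinPolynomial R n k).eval x = binomWeight x n k := by
  simp [bernsteinPolynomial, binomWeight]

theorem sum_range_binomWeight (x : R) (n : ℕ) :
    ∑ k ∈ range (n + 1), binomWeight x n k = 1 := by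
  simpa [Polynomial.eval_finsetSum, eval_bernsteinPolynomial] using
    congr_arg (Polynomial.eval x) (bernsteinPolynomial.sum R n)

theorem binomWeight_nonneg {x : ℝ} (hx0 : 0 ≤ x) (hx1 : x ≤ 1) (n k : ℕ) :
    0 ≤ binomWeight x n k := by
  have : 0 ≤ 1 - x := by linarith
  unfold binomWeight
  positivity

theorem sum_range_sq_mul_binomWeight (x : ℝ) {n : ℕ} (hn : n ≠ 0) :
    ∑ k ∈ range (n + 1), ((k : ℝ) / n - x) ^ 2 * binomWeight x n k = x * (1 - x) / n := by
  have hn' : (n : ℝ) ≠ 0 := by exact_mod_cast hn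
  have := congr_arg (Polynomial.eval x) (bernsteinPolynomial.variance ℝ n)
  simp only [Polynomial.eval_finsetSum, Polynomial.eval_mul, Polynomial.eval_pow,
    Polynomial.eval_sub, Polynomial.eval_X, Polynomial.eval_natCast, Polynomial.eval_one,
    eval_bernsteinPolynomial, nsmul_eq_mul] at this
  calc ∑ k ∈ range (n + 1), ((k : ℝ) / n - x) ^ 2 * binomWeight x n k
      = (∑ k ∈ range (n + 1), (n * x - k) ^ 2 * binomWeight x n k) / n ^ 2 := by
        rw [sum_div]
        refine sum_congr rfl fun k _ => ?_
        field_simp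
        ring
    _ = x * (1 - x) / n := by
        rw [this]
        field_simp

end binomWeight

theorem Complex.ofReal_binomWeight (x : ℝ) (n k : ℕ) :
    ((binomWeight x n k : ℝ) : ℂ) = binomWeight (x : ℂ) n k := by
  simp [binomWeight]

theorem exists_abs_le_add_mul_sq {g : ℝ → ℝ} {x M ε : ℝ} (hg : Tendsto g (𝓝 x) (𝓝 0))
    (hM : ∀ y, |g y| ≤ M) (hε : 0 < ε) : ∃ C, ∀ y, |g y| ≤ ε + C * (y - x) ^ 2 := by
  obtain ⟨δ, hδ, hgδ⟩ := Metric.tendsto_nhds_nhds.1 hg ε hε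
  have hM0 : 0 ≤ M := (abs_nonneg _).trans (hM x)
  refine ⟨M / δ ^ 2, fun y => ?_⟩
  rcases lt_or_ge |y - x| δ with hnear | hfar
  · have : |g y| < ε := by simpa [Real.dist_eq] using hgδ (by rwa [Real.dist_eq])
    have : 0 ≤ M / δ ^ 2 * (y - x) ^ 2 := by positivity
    linarith
  · have hsq : δ ^ 2 ≤ (y - x) ^ 2 := by simpa using pow_le_pow_left₀ hδ.le hfar 2
    have : M ≤ M / δ ^ 2 * (y - x) ^ 2 := by
      rw [div_mul_eq_mul_div, le_div_iff₀ (by positivity)]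
      exact mul_le_mul_of_nonneg_left hsq hM0
    linarith [hM y]

theorem tendsto_sum_range_abs_mul_binomWeight {g : ℝ → ℝ} {x M : ℝ} (hx0 : 0 ≤ x) (hx1 : x ≤ 1)
    (hg : Tendsto g (𝓝 x) (𝓝 0)) (hM : ∀ y, |g y| ≤ M) :
    Tendsto (fun n : ℕ => ∑ k ∈ range (n + 1), |g (k / n)| * binomWeight x n k)
      atTop (𝓝 0) := by
  refine Metric.tendsto_atTop.2 fun ε hε => ?_
  obtain ⟨C, hC⟩ := exists_abs_le_add_mul_sq hg hM (half_pos hε)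
  obtain ⟨N, hN⟩ := eventually_atTop.1 <| (tendsto_const_div_atTop_nhds_zero_nat
    (C * (x * (1 - x)))).eventually (gt_mem_nhds (half_pos hε))
  refine ⟨N + 1, fun n hn => ?_⟩
  have hn0 : n ≠ 0 := by omega
  have hP := binomWeight_nonneg hx0 hx1 n
  rw [Real.dist_eq, sub_zero, abs_of_nonneg (sum_nonneg fun k _ => by have := hP k; positivity)]
  calc ∑ k ∈ range (n + 1), |g (k / n)| * binomWeight x n k
      ≤ ∑ k ∈ range (n + 1), (ε / 2 + C * ((k : ℝ) / n - x) ^ 2) * binomWeight x n k :=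
        sum_le_sum fun k _ => mul_le_mul_of_nonneg_right (hC _) (hP k)
    _ = ε / 2 * ∑ k ∈ range (n + 1), binomWeight x n k
          + C * ∑ k ∈ range (n + 1), ((k : ℝ) / n - x) ^ 2 * binomWeight x n k := by
        simp only [add_mul, sum_add_distrib, mul_sum, mul_assoc]
    _ = ε / 2 + C * (x * (1 - x)) / n := by
        rw [sum_range_binomWeight, sum_range_sq_mul_binomWeight x hn0]
        ring
    _ < ε := by linarith [hN n (by omega)]

section RootsOfUnityFilter

variable {K : Type*} [Field K] {ζ : K} {a : ℕ}

theorem IsPrimitiveRoot.sum_range_pow_div_pow_pow (hζ : IsPrimitiveRoot ζ a) (ha : a ≠ 0)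
    (k b : ℕ) : ∑ j ∈ range a, (ζ ^ k / ζ ^ b) ^ j = if k ≡ b [MOD a] then (a : K) else 0 := by
  have hζb : ζ ^ b ≠ 0 := pow_ne_zero _ (hζ.ne_zero ha)
  split_ifs with hkb
  · rw [pow_eq_pow_of_modEq hkb hζ.pow_eq_one, div_self hζb]
    simp
  · have hne : ζ ^ k / ζ ^ b ≠ 1 := by
      rw [Ne, div_eq_one_iff_eq hζb, (hζ.isOfFinOrder ha).pow_eq_pow_iff_modEq, ← hζ.eq_orderOf]
      exact hkb
    rw [geom_sum_eq hne, div_pow, ← pow_mul, ← pow_mul, mul_comm k, mul_comm b, pow_mul,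
      pow_mul, hζ.pow_eq_one, one_pow, one_pow, div_one, sub_self, zero_div]

theorem IsPrimitiveRoot.natCast_mul_sum_filter_modEq_binomWeight (hζ : IsPrimitiveRoot ζ a)
    (ha : a ≠ 0) (z : K) (n b : ℕ) :
    (a : K) * ∑ k ∈ (range (n + 1)).filter (· ≡ b [MOD a]), binomWeight z n k
      = ∑ j ∈ range a, (z * ζ ^ j + (1 - z)) ^ n / (ζ ^ b) ^ j := by
  calc (a : K) * ∑ k ∈ (range (n + 1)).filter (· ≡ b [MOD a]), binomWeight z n k
      = ∑ k ∈ range (n + 1), binomWeight z n k * ∑ j ∈ range a, (ζ ^ k / ζ ^ b) ^ j := by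
        simp only [hζ.sum_range_pow_div_pow_pow ha, mul_ite, mul_zero, ← sum_filter, sum_mul,
          mul_comm (a : K)]
    _ = ∑ j ∈ range a, (∑ k ∈ range (n + 1),
          (z * ζ ^ j) ^ k * (1 - z) ^ (n - k) * n.choose k) / (ζ ^ b) ^ j := by
        simp only [mul_sum]
        rw [sum_comm]
        refine sum_congr rfl fun j _ => ?_
        rw [sum_div]
        refine sum_congr rfl fun k _ => ?_
        rw [div_pow, ← pow_mul, ← pow_mul, mul_comm k j, pow_mul, binomWeight]
        ring
    _ = ∑ j ∈ range a, (z * ζ ^ j + (1 - z)) ^ n / (ζ ^ b) ^ j := by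
        simp only [add_pow]

end RootsOfUnityFilter

theorem norm_mul_add_one_sub_lt_one {x : ℝ} (hx0 : 0 < x) (hx1 : x < 1) {z : ℂ} (hz : ‖z‖ = 1)
    (hz1 : z ≠ 1) : ‖(x : ℂ) * z + (1 - x)‖ < 1 := by
  simpa [Complex.real_smul] using
    norm_combo_lt_of_ne hz.le norm_one.le hz1 hx0 (sub_pos.2 hx1) (add_sub_cancel x 1)

theorem tendsto_sum_filter_modEq_binomWeight {x : ℝ} (hx0 : 0 < x) (hx1 : x < 1) {a : ℕ}
    (ha : a ≠ 0) (b : ℕ) :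
    Tendsto (fun n => ∑ k ∈ (range (n + 1)).filter (· ≡ b [MOD a]), binomWeight x n k)
      atTop (𝓝 (1 / a)) := by
  have hζ := Complex.isPrimitiveRoot_exp a ha
  set ζ := Complex.exp (2 * Real.pi * Complex.I / a)
  have hterm : ∀ j ∈ range a, Tendsto (fun n : ℕ => ((x : ℂ) * ζ ^ j + (1 - x)) ^ n / (ζ ^ b) ^ j)
      atTop (𝓝 (if j = 0 then 1 else 0)) := by
    intro j hj
    split_ifs with hj0
    · simp [hj0]
    · have hζj : (ζ ^ j) ^ a = 1 := by rw [← pow_mul, mul_comm, pow_mul, hζ.pow_eq_one, one_pow]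
      have hnorm : ‖(x : ℂ) * ζ ^ j + (1 - x)‖ < 1 :=
        norm_mul_add_one_sub_lt_one hx0 hx1 (Complex.norm_eq_one_of_pow_eq_one hζj ha)
          (hζ.pow_ne_one_of_pos_of_lt hj0 (mem_range.1 hj))
      simpa using (tendsto_pow_atTop_nhds_zero_of_norm_lt_one hnorm).div_const ((ζ ^ b) ^ j)
  have hlim := (tendsto_finsetSum _ hterm).const_mul (1 / (a : ℂ))
  rw [sum_ite_eq' (range a) 0, if_pos (mem_range.2 (Nat.pos_of_ne_zero ha)), mul_one] at hlim
  rw [← tendsto_ofReal_iff]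
  push_cast
  refine hlim.congr fun n => ?_
  rw [← hζ.natCast_mul_sum_filter_modEq_binomWeight ha, ← mul_assoc, one_div_mul_cancel
    (Nat.cast_ne_zero.2 ha), one_mul]
  simp only [Complex.ofReal_binomWeight]

theorem tendsto_sum_filter_mul_binomWeight {F : ℝ → ℝ} {x M L : ℝ} (hx0 : 0 ≤ x) (hx1 : x ≤ 1)
    (hF : ContinuousAt F x) (hM : ∀ y, |F y| ≤ M) (p : ℕ → Prop) [DecidablePred p]
    (hp : Tendsto (fun n => ∑ k ∈ (range (n + 1)).filter p, binomWeight x n k) atTop (𝓝 L)) :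
    Tendsto (fun n => ∑ k ∈ (range (n + 1)).filter p, F (k / n) * binomWeight x n k)
      atTop (𝓝 (F x * L)) := by
  have hg : Tendsto (fun y => F y - F x) (𝓝 x) (𝓝 0) := by
    simpa using hF.tendsto.sub_const (F x)
  have hgM : ∀ y, |F y - F x| ≤ M + M := fun y => (abs_sub _ _).trans (add_le_add (hM y) (hM x))
  have hdiff : Tendsto (fun n => ∑ k ∈ (range (n + 1)).filter p, F (k / n) * binomWeight x n k
      - F x * ∑ k ∈ (range (n + 1)).filter p, binomWeight x n k) atTop (𝓝 0) := by
    refine squeeze_zero_norm (fun n => ?_) (tendsto_sum_range_abs_mul_binomWeight hx0 hx1 hg hgM)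
    have hP := binomWeight_nonneg hx0 hx1 n
    rw [mul_sum, ← sum_sub_distrib, Real.norm_eq_abs]
    calc |∑ k ∈ (range (n + 1)).filter p, (F (k / n) * binomWeight x n k - F x * binomWeight x n k)|
        ≤ ∑ k ∈ (range (n + 1)).filter p, |F (k / n) - F x| * binomWeight x n k := by
          refine (abs_sum_le_sum_abs _ _).trans_eq (sum_congr rfl fun k _ => ?_)
          rw [← sub_mul, abs_mul, abs_of_nonneg (hP k)]
      _ ≤ ∑ k ∈ range (n + 1), |F (k / n) - F x| * binomWeight x n k :=
          sum_le_sum_of_subset_of_nonneg (filter_subset _ _) fun k _ _ =>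
            mul_nonneg (abs_nonneg _) (hP k)
  simpa using hdiff.add (hp.const_mul (F x))

theorem sum_filter_Icc_mod_eq_sum_indicator (f : ℝ → ℝ) (α β x : ℝ) (a b : ℕ) {n : ℕ}
    (hn : n ≠ 0) :
    ∑ k ∈ (range (n + 1)).filter
        (fun k : ℕ => α * n ≤ (k : ℝ) ∧ (k : ℝ) ≤ β * n ∧ k % a = b % a),
      f ((k : ℝ) / n) * (n.choose k) * x ^ k * (1 - x) ^ (n - k)
      = ∑ k ∈ (range (n + 1)).filter (· ≡ b [MOD a]),
          (Set.Icc α β).indicator f (k / n) * binomWeight x n k := by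
  have hn' : (0 : ℝ) < n := by positivity
  rw [sum_filter, sum_filter]
  refine sum_congr rfl fun k _ => ?_
  simp only [Set.indicator_apply, Set.mem_Icc, le_div_iff₀ hn', div_le_iff₀ hn', binomWeight,
    Nat.ModEq]
  split_ifs <;> first | ring1 | tauto

/-- Binomial convolution asymptotics (Bernstein-type lemma): for `0 ≤ α < h < β ≤ 1`,
`a ≥ 1`, `b ∈ ℕ` and `f` continuous on `[α, β]`,
`Σ_{αn ≤ k ≤ βn, k ≡ b [a]} f(k/n) C(n,k) h^k (1-h)^{n-k} → f(h)/a`. -/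
theorem stmt7 (α β h : ℝ) (hα : 0 ≤ α) (hαh : α < h) (hhβ : h < β) (hβ : β ≤ 1)
    (a b : ℕ) (ha : 1 ≤ a) (f : ℝ → ℝ) (hf : ContinuousOn f (Set.Icc α β)) :
    Tendsto
      (fun n : ℕ =>
        ∑ k ∈ (Finset.range (n + 1)).filter
            (fun k : ℕ => α * n ≤ (k : ℝ) ∧ (k : ℝ) ≤ β * n ∧ k % a = b % a),
          f ((k : ℝ) / n) * (n.choose k) * h ^ k * (1 - h) ^ (n - k))
      atTop (𝓝 (f h / a)) := by
  have h0 : 0 < h := hα.trans_lt hαh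
  have h1 : h < 1 := hhβ.trans_le hβ
  have hIcc : Set.Icc α β ∈ 𝓝 h := Icc_mem_nhds hαh hhβ
  obtain ⟨C, hC⟩ := isCompact_Icc.exists_bound_of_continuousOn hf
  have hF : ContinuousAt ((Set.Icc α β).indicator f) h :=
    (hf.continuousAt hIcc).congr
      (eventuallyEq_of_mem hIcc fun y hy => (Set.indicator_of_mem hy f).symm)
  have hM : ∀ y, |(Set.Icc α β).indicator f y| ≤ C := fun y => by
    by_cases hy : y ∈ Set.Icc α β
    · simpa [hy] using hC y hy
    · simpa [hy] using (norm_nonneg _).trans (hC h (mem_of_mem_nhds hIcc))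
  have hlim := tendsto_sum_filter_mul_binomWeight h0.le h1.le hF hM _
    (tendsto_sum_filter_modEq_binomWeight h0 h1 (by omega : a ≠ 0) b)
  rw [Set.indicator_of_mem (mem_of_mem_nhds hIcc), ← div_eq_mul_one_div] at hlim
  refine hlim.congr' ?_
  filter_upwards [eventually_ne_atTop 0] with n hn
  rw [sum_filter_Icc_mod_eq_sum_indicator f α β h a b hn]
end

section
/- For every p ∈ (0,1) and every integer r ≥ 1, lim_{n→∞, n even} P(N_n = r | τ > n, S_n = 0) = r/2^{r+1}; the limit does not depend on p. -/
/-!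
Given `S_{2n} = 0`, exactly `n` of the first `2n` steps go up, so every admissible path
has probability `p^n q^n`: conditioned on `τ > 2n, S_{2n} = 0` the path is uniform on the
nonnegative bridges of length `2n`, and `p` drops out. These are counted by `catalan n`, and the
ones with `r` returns to `0` correspond to the positive paths of length `2n - r` ending at `r`
(delete the down-step into each return), of which there are `(r / n) * choose (2n - r - 1) (n - 1)`
by the ballot theorem. The conditional probability is therefore
`r * (n + 1)_{r + 1} / (2n)_{r + 1}` (falling factorials), which tends to `r / 2 ^ (r + 1)`.
-/

open MeasureTheory ProbabilityTheory Filter Real Topology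

noncomputable section

/-- Position of the 1D nearest-neighbour walk after `n` steps (started at `0`). -/
def walk1 {Ω : Type*} (ξ : ℕ → Ω → ℤ) (n : ℕ) (ω : Ω) : ℤ :=
  ∑ k ∈ Finset.range n, ξ k ω

/-- `N_n`: the number of returns to `0` up to time `n`, i.e. `#{1 ≤ k ≤ n : S_k = 0}`. -/
def visits {Ω : Type*} (ξ : ℕ → Ω → ℤ) (n : ℕ) (ω : Ω) : ℕ :=
  ((Finset.Icc 1 n).filter (fun k => walk1 ξ k ω = 0)).card

/-- The event `τ > n`: the walk stays non-negative up to time `n`. -/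
def stays1 {Ω : Type*} (ξ : ℕ → Ω → ℤ) (n : ℕ) : Set Ω :=
  {ω | ∀ k ≤ n, 0 ≤ walk1 ξ k ω}

/-- `θ_r`: the time of the `r`-th return to `0`
(`θ_0 = 0`, `θ_{r+1} = inf {n > θ_r : S_n = 0}`). -/
def retTime {Ω : Type*} (ξ : ℕ → Ω → ℤ) : ℕ → Ω → ℕ
  | 0, _ => 0
  | r + 1, ω => sInf {n | retTime ξ r ω < n ∧ walk1 ξ n ω = 0}

lemma Nat.choose_sub_mul_descFactorial (N K r : ℕ) :
    (N - r).choose K * N.descFactorial r = N.choose K * (N - K).descFactorial r := by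
  induction r with
  | zero => simp
  | succ r ih =>
    have hstep : (N - (r + 1)).choose K * (N - r) = (N - r).choose K * (N - K - r) := by
      rcases Nat.eq_zero_or_pos (N - r) with h | h
      · rw [h, show N - K - r = 0 by omega]; simp
      · have := Nat.choose_mul_succ_eq (N - (r + 1)) K
        rwa [show N - (r + 1) + 1 = N - r by omega, show N - r - K = N - K - r by omega] at this
    rw [Nat.descFactorial_succ, Nat.descFactorial_succ, ← mul_assoc, hstep, mul_right_comm, ih]
    ring

lemma tendsto_succ_div_two_mul :
    Tendsto (fun n : ℕ => ((n + 1 : ℕ) : ℝ) / (2 * n : ℕ)) atTop (𝓝 (1 / 2)) := by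
  have h := (tendsto_inv_atTop_nhds_zero_nat (𝕜 := ℝ)).const_mul (1 / 2) |>.const_add (1 / 2)
  rw [mul_zero, add_zero] at h
  refine h.congr' <| (eventually_gt_atTop 0).mono fun n hn => ?_
  have : (n : ℝ) ≠ 0 := by positivity
  push_cast
  field_simp

open Asymptotics in
lemma tendsto_descFactorial_div_descFactorial (s : ℕ) :
    Tendsto (fun n : ℕ => ((n + 1).descFactorial s : ℝ) / (2 * n).descFactorial s) atTop
      (𝓝 ((1 / 2) ^ s)) := by
  have h₁ := (isEquivalent_descFactorial s).comp_tendsto (tendsto_add_atTop_nat 1)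
  have h₂ := (isEquivalent_descFactorial s).comp_tendsto
    (tendsto_id.const_mul_atTop' two_pos : Tendsto (fun n : ℕ => 2 * n) atTop atTop)
  refine (h₁.div h₂).symm.tendsto_nhds ?_
  simpa only [Function.comp_def, Pi.div_def, div_pow] using tendsto_succ_div_two_mul.pow s

lemma card_filter_fin_snoc {α : Type*} [Fintype α] {m : ℕ}
    (Q : (Fin (m + 1) → α) → Prop) [DecidablePred Q] :
    (Finset.univ.filter Q).card =
      ∑ a : α, (Finset.univ.filter fun g : Fin m → α => Q (Fin.snoc g a)).card := by
  simp only [Finset.card_filter]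
  rw [← (Fin.snocEquiv fun _ => α).sum_comp, Fintype.sum_prod_type]
  rfl

namespace NonnegBridge

open Finset
open scoped ENNReal

def stepOf (b : Bool) : ℤ := if b then 1 else -1

@[simp] lemma stepOf_true : stepOf true = 1 := rfl
@[simp] lemma stepOf_false : stepOf false = -1 := rfl

lemma stepOf_injective : Function.Injective stepOf := by decide

lemma stepOf_decide_eq_one {x : ℤ} (hx : x = 1 ∨ x = -1) : stepOf (decide (x = 1)) = x := by
  rcases hx with rfl | rfl <;> rfl

def height {m : ℕ} (v : Fin m → ℤ) (k : ℕ) : ℤ :=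
  ∑ i : Fin m, if (i : ℕ) < k then v i else 0

def IsNonnegTo {m : ℕ} (j : ℤ) (v : Fin m → ℤ) : Prop :=
  (∀ k ≤ m, 0 ≤ height v k) ∧ height v m = j

instance {m : ℕ} (j : ℤ) : DecidablePred (IsNonnegTo (m := m) j) :=
  fun _ => inferInstanceAs (Decidable (_ ∧ _))

def returns {m : ℕ} (v : Fin m → ℤ) : ℕ := #{k ∈ Icc 1 m | height v k = 0}

def nonnegCount (m : ℕ) (j : ℤ) : ℕ := #{f : Fin m → Bool | IsNonnegTo j (stepOf ∘ f)}

def nonnegReturnsCount (m : ℕ) (j : ℤ) (r : ℕ) : ℕ :=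
  #{f : Fin m → Bool | IsNonnegTo j (stepOf ∘ f) ∧ returns (stepOf ∘ f) = r}

/-- `ballot m j` counts the paths of length `m` from `0` to `j` that are positive at times
`1, …, m`. -/
def ballot : ℕ → ℤ → ℕ
  | 0, j => if j = 0 then 1 else 0
  | m + 1, j => if 0 < j then ballot m (j - 1) + ballot m (j + 1) else 0

section Snoc

variable {m : ℕ} (v : Fin m → ℤ) (x : ℤ)

@[simp] lemma height_zero : height v 0 = 0 := by simp [height]

lemma height_snoc_of_le {k : ℕ} (hk : k ≤ m) :
    height (Fin.snoc v x : Fin (m + 1) → ℤ) k = height v k := by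
  simp [height, Fin.sum_univ_castSucc, hk.not_gt]

lemma height_snoc_succ : height (Fin.snoc v x : Fin (m + 1) → ℤ) (m + 1) = height v m + x := by
  simp [height, Fin.sum_univ_castSucc]

lemma isNonnegTo_snoc {j : ℤ} (hj : 0 ≤ j) :
    IsNonnegTo j (Fin.snoc v x : Fin (m + 1) → ℤ) ↔ IsNonnegTo (j - x) v := by
  simp only [IsNonnegTo, height_snoc_succ]
  constructor
  · rintro ⟨hnonneg, hend⟩
    refine ⟨fun k hk => ?_, by omega⟩
    simpa [height_snoc_of_le v x hk] using hnonneg k (by omega)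
  · rintro ⟨hnonneg, hend⟩
    refine ⟨fun k hk => ?_, by omega⟩
    rcases Nat.lt_or_eq_of_le hk with hk | rfl
    · simpa [height_snoc_of_le v x (Nat.le_of_lt_succ hk)] using hnonneg k (by omega)
    · simp only [height_snoc_succ]; omega

lemma returns_snoc :
    returns (Fin.snoc v x : Fin (m + 1) → ℤ) =
      returns v + if height v m + x = 0 then 1 else 0 := by
  have hIcc : Icc 1 (m + 1) = insert (m + 1) (Icc 1 m) := by
    ext k; simp only [mem_Icc, mem_insert]; omega
  have hold : {k ∈ Icc 1 m | height (Fin.snoc v x : Fin (m + 1) → ℤ) k = 0}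
      = {k ∈ Icc 1 m | height v k = 0} :=
    filter_congr fun k hk => by rw [height_snoc_of_le v x (mem_Icc.mp hk).2]
  rw [returns, hIcc, filter_insert, height_snoc_succ, hold]
  split_ifs
  · rw [card_insert_of_notMem (by simp), returns]
  · rfl

lemma isNonnegTo_snoc_and_returns {j : ℤ} (hj : 0 ≤ j) (r : ℕ) :
    (IsNonnegTo j (Fin.snoc v x : Fin (m + 1) → ℤ) ∧
        returns (Fin.snoc v x : Fin (m + 1) → ℤ) = r + if j = 0 then 1 else 0) ↔
      IsNonnegTo (j - x) v ∧ returns v = r := by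
  rw [isNonnegTo_snoc v x hj, returns_snoc]
  refine and_congr_right fun h => ?_
  rw [h.2, sub_add_cancel]
  omega

end Snoc

lemma IsNonnegTo.nonneg {m : ℕ} {j : ℤ} {v : Fin m → ℤ} (h : IsNonnegTo j v) : 0 ≤ j :=
  h.2 ▸ h.1 m le_rfl

lemma isNonnegTo_zero_iff {j : ℤ} (v : Fin 0 → ℤ) : IsNonnegTo j v ↔ j = 0 := by
  simp [IsNonnegTo, eq_comm]

lemma height_eq_card_sub_card {m : ℕ} (f : Fin m → Bool) :
    height (stepOf ∘ f) m = #{i | f i} - #{i | ¬f i} := by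
  simp [height, stepOf, sum_ite, sub_eq_add_neg]

lemma nonnegCount_zero (j : ℤ) : nonnegCount 0 j = if j = 0 then 1 else 0 := by
  simp only [nonnegCount, isNonnegTo_zero_iff]
  split_ifs <;> simp [*]

lemma nonnegCount_of_neg {m : ℕ} {j : ℤ} (hj : j < 0) : nonnegCount m j = 0 :=
  card_eq_zero.mpr <| filter_eq_empty_iff.mpr fun _ _ h => hj.not_ge h.nonneg

lemma nonnegCount_succ (m : ℕ) {j : ℤ} (hj : 0 ≤ j) :
    nonnegCount (m + 1) j = nonnegCount m (j - 1) + nonnegCount m (j + 1) := by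
  simp only [nonnegCount, card_filter_fin_snoc, Fintype.sum_bool, Fin.comp_snoc,
    isNonnegTo_snoc _ _ hj, stepOf_true, stepOf_false, sub_neg_eq_add]
  rfl

lemma nonnegReturnsCount_zero (j : ℤ) (r : ℕ) :
    nonnegReturnsCount 0 j r = if j = 0 ∧ r = 0 then 1 else 0 := by
  simp only [nonnegReturnsCount, isNonnegTo_zero_iff]
  by_cases h : j = 0 ∧ r = 0
  · simp [h, returns]
  · rw [if_neg h, card_eq_zero, filter_eq_empty_iff]
    rintro f - ⟨rfl, hr⟩
    exact h ⟨rfl, by simpa [returns, eq_comm] using hr⟩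

lemma nonnegReturnsCount_of_neg {m : ℕ} {j : ℤ} (hj : j < 0) (r : ℕ) :
    nonnegReturnsCount m j r = 0 :=
  card_eq_zero.mpr <| filter_eq_empty_iff.mpr fun _ _ h => hj.not_ge h.1.nonneg

lemma nonnegReturnsCount_of_lt {m r : ℕ} (hr : m < r) (j : ℤ) :
    nonnegReturnsCount m j r = 0 := by
  refine card_eq_zero.mpr <| filter_eq_empty_iff.mpr fun f _ h => ?_
  have : returns (stepOf ∘ f) ≤ m := (card_filter_le _ _).trans (by simp)
  omega

lemma nonnegReturnsCount_succ_zero_zero (m : ℕ) : nonnegReturnsCount (m + 1) 0 0 = 0 := by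
  refine card_eq_zero.mpr <| filter_eq_empty_iff.mpr fun f _ h => ?_
  have : 0 < returns (stepOf ∘ f) := card_pos.mpr ⟨m + 1, by simp [h.1.2]⟩
  omega

lemma nonnegReturnsCount_succ (m : ℕ) {j : ℤ} (hj : 0 ≤ j) (r : ℕ) :
    nonnegReturnsCount (m + 1) j (r + if j = 0 then 1 else 0) =
      nonnegReturnsCount m (j - 1) r + nonnegReturnsCount m (j + 1) r := by
  simp only [nonnegReturnsCount, card_filter_fin_snoc, Fintype.sum_bool, Fin.comp_snoc,
    isNonnegTo_snoc_and_returns _ _ hj, stepOf_true, stepOf_false, sub_neg_eq_add]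
  rfl

lemma ballot_succ (m : ℕ) {j : ℤ} (hj : 0 < j) :
    ballot (m + 1) j = ballot m (j - 1) + ballot m (j + 1) := by
  rw [ballot, if_pos hj]

lemma ballot_one (j : ℤ) : ballot 1 j = if j = 1 then 1 else 0 := by
  simp only [ballot]
  split_ifs <;> omega

lemma ballot_of_nonpos {m : ℕ} (hm : 0 < m) {j : ℤ} (hj : j ≤ 0) : ballot m j = 0 := by
  obtain ⟨m, rfl⟩ := Nat.exists_eq_add_of_lt hm
  rw [ballot, if_neg hj.not_gt]

/-- Prepending an up-step turns a nonnegative path into a positive one. -/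
lemma nonnegCount_eq_ballot (m : ℕ) {j : ℤ} (hj : 0 ≤ j) :
    nonnegCount m j = ballot (m + 1) (j + 1) := by
  induction m generalizing j with
  | zero => simp [nonnegCount_zero, ballot_one]
  | succ m ih =>
    rw [nonnegCount_succ m hj, ballot_succ _ (by omega), ih (by omega : 0 ≤ j + 1)]
    rcases hj.eq_or_lt with rfl | hj
    · simp [nonnegCount_of_neg, ballot_of_nonpos]
    · rw [ih (by omega : 0 ≤ j - 1), sub_add_cancel, add_sub_cancel_right]

/-- Deleting the down-step into each return to `0` turns a nonnegative path with `r` returns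
into a positive one. -/
lemma nonnegReturnsCount_eq_ballot {m r : ℕ} (hr : r ≤ m) {j : ℤ} (hj : 0 ≤ j) :
    nonnegReturnsCount m j r = ballot (m - r) (j + r) := by
  induction m generalizing r j with
  | zero =>
    obtain rfl : r = 0 := by omega
    simp [nonnegReturnsCount_zero, ballot]
  | succ m ih =>
    rcases hj.eq_or_lt with rfl | hj
    · rcases r with _ | r
      · simp [nonnegReturnsCount_succ_zero_zero, ballot_of_nonpos]
      · have := nonnegReturnsCount_succ m le_rfl r
        rw [if_pos rfl, nonnegReturnsCount_of_neg (by omega : (0 : ℤ) - 1 < 0), zero_add,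
          zero_add] at this
        rw [this, ih (by omega) zero_le_one]
        congr 1 <;> push_cast <;> omega
    · have := nonnegReturnsCount_succ m hj.le r
      rw [if_neg hj.ne', add_zero] at this
      rw [this]
      rcases Nat.lt_or_ge m r with hmr | hmr
      · rw [nonnegReturnsCount_of_lt hmr, nonnegReturnsCount_of_lt hmr,
          show m + 1 - r = 0 by omega, ballot, if_neg (by omega)]
      · rw [ih hmr (by omega), ih hmr (by omega), show m + 1 - r = m - r + 1 by omega,
          ballot_succ _ (by omega)]
        congr 2 <;> ring

/-- The ballot theorem, in the form given by the reflection principle. -/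
lemma ballot_eq_choose_sub_choose {m u : ℕ} (h : m ≤ 2 * u) :
    (ballot (m + 1) (2 * u + 1 - m) : ℤ) = m.choose u - m.choose (u + 1) := by
  induction m generalizing u with
  | zero =>
    rcases u with _ | u
    · simp [ballot_one]
    · rw [ballot_one, if_neg (by push_cast; omega)]
      simp
  | succ m ih =>
    obtain ⟨v, rfl⟩ : ∃ v, u = v + 1 := ⟨u - 1, by omega⟩
    have hright := ih (u := v + 1) (by omega)
    have hleft : (ballot (m + 1) (2 * v + 1 - m) : ℤ) = m.choose v - m.choose (v + 1) := by
      rcases (by omega : m ≤ 2 * v ∨ m = 2 * v + 1) with hm | rfl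
      · exact ih hm
      · rw [ballot_of_nonpos (by omega) (by push_cast; omega), Nat.choose_symm_half, sub_self,
          Nat.cast_zero]
    rw [ballot_succ _ (by push_cast; omega), Nat.choose_succ_succ', Nat.choose_succ_succ']
    push_cast at hleft hright ⊢
    rw [show 2 * ((v : ℤ) + 1) + 1 - (m + 1) - 1 = 2 * v + 1 - m by ring,
      show 2 * ((v : ℤ) + 1) + 1 - (m + 1) + 1 = 2 * (v + 1) + 1 - m by ring, hleft, hright]
    ring

lemma nonnegCount_two_mul_zero (n : ℕ) : nonnegCount (2 * n) 0 = catalan n := by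
  have hballot := ballot_eq_choose_sub_choose (m := 2 * n) (u := n) le_rfl
  have hsucc := Nat.choose_succ_right_eq (2 * n) n
  rw [show (2 * n : ℕ) - n = n by omega] at hsucc
  rw [show 2 * (n : ℤ) + 1 - ((2 * n : ℕ) : ℤ) = 0 + 1 by push_cast; ring,
    ← nonnegCount_eq_ballot _ le_rfl] at hballot
  refine Nat.eq_of_mul_eq_mul_left n.succ_pos ?_
  rw [succ_mul_catalan_eq_centralBinom, Nat.centralBinom_eq_two_mul_choose]
  zify at hsucc ⊢
  linear_combination ((n : ℤ) + 1) * hballot - hsucc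

lemma nonnegReturnsCount_two_mul_zero_mul {n r : ℕ} (hr : r ≤ n) :
    nonnegReturnsCount (2 * n) 0 r * n = r * (2 * n - 1 - r).choose (n - 1) := by
  rcases Nat.eq_zero_or_pos r with rfl | hr0
  · rcases Nat.eq_zero_or_pos n with rfl | hn
    · simp
    · rw [nonnegReturnsCount_eq_ballot (by omega) le_rfl, ballot_of_nonpos (by omega) (by simp)]
      simp
  obtain ⟨k, rfl⟩ : ∃ k, n = k + 1 := ⟨n - 1, by omega⟩
  have hballot := ballot_eq_choose_sub_choose (m := 2 * k + 1 - r) (u := k) (by omega)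
  have hsucc := Nat.choose_succ_right_eq (2 * k + 1 - r) k
  rw [show 2 * k + 1 - r - k = k + 1 - r by omega] at hsucc
  rw [show 2 * k + 1 - r + 1 = 2 * (k + 1) - r by omega,
    show 2 * (k : ℤ) + 1 - ((2 * k + 1 - r : ℕ) : ℤ) = 0 + r by omega,
    ← nonnegReturnsCount_eq_ballot (by omega) le_rfl] at hballot
  rw [show 2 * (k + 1) - 1 - r = 2 * k + 1 - r by omega, Nat.add_sub_cancel]
  zify [hr] at hsucc ⊢
  linear_combination ((k : ℤ) + 1) * hballot - hsucc

lemma nonnegReturnsCount_div_catalan {n r : ℕ} (hn : 0 < n) (hr : r ≤ n) :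
    (nonnegReturnsCount (2 * n) 0 r : ℝ) / catalan n =
      r * (n + 1).descFactorial (r + 1) / (2 * n).descFactorial (r + 1) := by
  obtain ⟨k, rfl⟩ : ∃ k, n = k + 1 := ⟨n - 1, by omega⟩
  have hN := nonnegReturnsCount_two_mul_zero_mul hr
  rw [show 2 * (k + 1) - 1 - r = 2 * k + 1 - r by omega, Nat.add_sub_cancel] at hN
  have hdesc := Nat.choose_sub_mul_descFactorial (2 * k + 1) k r
  rw [show 2 * k + 1 - k = k + 1 by omega] at hdesc
  have hcat := succ_mul_catalan_eq_centralBinom (k + 1)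
  rw [Nat.centralBinom_eq_two_mul_choose] at hcat
  have hpascal := Nat.add_one_mul_choose_eq (2 * k + 1) k
  have hD₁ := Nat.succ_descFactorial_succ (k + 1) r
  have hD₂ := Nat.succ_descFactorial_succ (2 * k + 1) r
  rw [show 2 * k + 1 + 1 = 2 * (k + 1) by ring] at hpascal hD₂
  have hcat_pos : (0 : ℝ) < catalan (k + 1) := by
    exact_mod_cast Nat.pos_of_mul_pos_left (hcat ▸ Nat.choose_pos (by omega))
  have hD₂_pos : (0 : ℝ) < (2 * (k + 1)).descFactorial (r + 1) := by
    exact_mod_cast Nat.pos_of_ne_zero (Nat.descFactorial_eq_zero_iff_lt.not.mpr (by omega))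
  rw [div_eq_div_iff hcat_pos.ne' hD₂_pos.ne']
  refine mul_left_cancel₀ (by positivity : ((k : ℝ) + 1) ≠ 0) ?_
  rify at hN hdesc hcat hpascal hD₁ hD₂
  linear_combination ((k : ℝ) + 1) * nonnegReturnsCount (2 * (k + 1)) 0 r * hD₂
    - ((k : ℝ) + 1) * r * catalan (k + 1) * hD₁
    + (2 * ((k : ℝ) + 1)) * (2 * k + 1).descFactorial r * hN
    + 2 * ((k : ℝ) + 1) * r * hdesc
    + r * (k + 1).descFactorial r * hpascal
    - ((k : ℝ) + 1) * r * (k + 1).descFactorial r * hcat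

section Walk

variable {Ω : Type*} {ξ : ℕ → Ω → ℤ}

lemma walk1_eq_height {m k : ℕ} (hk : k ≤ m) (ω : Ω) :
    walk1 ξ k ω = height (fun i : Fin m => ξ i ω) k := by
  rw [height, Fin.sum_univ_eq_sum_range (fun i => if i < k then ξ i ω else 0), ← sum_filter,
    walk1]
  congr 1
  ext i
  simp only [mem_range, mem_filter]
  omega

lemma bridge_eq_setOf_isNonnegTo (m : ℕ) :
    stays1 ξ m ∩ {ω | walk1 ξ m ω = 0} = {ω | IsNonnegTo 0 fun i : Fin m => ξ i ω} := by
  ext ω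
  have h (k : ℕ) (hk : k ≤ m) := walk1_eq_height (ξ := ξ) hk ω
  simp +contextual [stays1, IsNonnegTo, h]

lemma visits_eq_returns (m : ℕ) (ω : Ω) : visits ξ m ω = returns fun i : Fin m => ξ i ω :=
  congrArg card <| filter_congr fun k hk => by rw [walk1_eq_height (mem_Icc.mp hk).2]

end Walk

section Probability

variable {Ω : Type*} [MeasurableSpace Ω] {P : Measure Ω} {ξ : ℕ → Ω → ℤ} {p q : ℝ}

def stepProb (p q : ℝ) (b : Bool) : ℝ≥0∞ := if b then ENNReal.ofReal p else ENNReal.ofReal q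

lemma measurableSet_setOf_steps (hmeas : ∀ k, Measurable (ξ k)) {m : ℕ}
    (Q : (Fin m → ℤ) → Prop) : MeasurableSet {ω | Q fun i : Fin m => ξ i ω} :=
  measurableSet_preimage (measurable_pi_lambda _ fun i => hmeas i)
    (Set.to_countable {v | Q v}).measurableSet

lemma measure_steps_eq_prod (hindep : iIndepFun ξ P)
    (hd₁ : ∀ k, P {ω | ξ k ω = 1} = ENNReal.ofReal p)
    (hd₂ : ∀ k, P {ω | ξ k ω = -1} = ENNReal.ofReal q) {m : ℕ} (f : Fin m → Bool) :
    P {ω | ∀ i : Fin m, ξ i ω = stepOf (f i)} = ∏ i, stepProb p q (f i) := by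
  have hset : {ω | ∀ i : Fin m, ξ i ω = stepOf (f i)} =
      ⋂ i : Fin m, ξ i ⁻¹' {stepOf (f i)} := by
    ext; simp
  rw [hset, (hindep.precomp Fin.val_injective).meas_iInter
    fun i => ⟨{stepOf (f i)}, trivial, rfl⟩]
  refine prod_congr rfl fun i _ => ?_
  cases f i
  · exact hd₂ i
  · exact hd₁ i

lemma ae_step_eq_one_or_neg_one [IsProbabilityMeasure P] (hmeas : ∀ k, Measurable (ξ k))
    (hp : 0 ≤ p) (hq : 0 ≤ q) (hpq : p + q = 1)
    (hd₁ : ∀ k, P {ω | ξ k ω = 1} = ENNReal.ofReal p)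
    (hd₂ : ∀ k, P {ω | ξ k ω = -1} = ENNReal.ofReal q) :
    ∀ᵐ ω ∂P, ∀ k, ξ k ω = 1 ∨ ξ k ω = -1 := by
  refine ae_all_iff.mpr fun k => ?_
  have hmeas₁ : MeasurableSet {ω | ξ k ω = 1} := hmeas k (measurableSet_singleton 1)
  have hmeas₂ : MeasurableSet {ω | ξ k ω = -1} := hmeas k (measurableSet_singleton (-1))
  have hdisj : Disjoint {ω | ξ k ω = 1} {ω | ξ k ω = -1} :=
    Set.disjoint_left.mpr fun ω h₁ h₂ => by simp_all
  have hunion : P ({ω | ξ k ω = 1} ∪ {ω | ξ k ω = -1}) = 1 := by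
    rw [measure_union hdisj hmeas₂, hd₁, hd₂, ← ENNReal.ofReal_add hp hq, hpq,
      ENNReal.ofReal_one]
  exact mem_ae_iff.mpr ((prob_compl_eq_zero_iff (hmeas₁.union hmeas₂)).mpr hunion)

lemma measure_setOf_steps (hmeas : ∀ k, Measurable (ξ k)) (hindep : iIndepFun ξ P)
    (hd₁ : ∀ k, P {ω | ξ k ω = 1} = ENNReal.ofReal p)
    (hd₂ : ∀ k, P {ω | ξ k ω = -1} = ENNReal.ofReal q)
    (hsteps : ∀ᵐ ω ∂P, ∀ k, ξ k ω = 1 ∨ ξ k ω = -1) {m : ℕ}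
    (Q : (Fin m → ℤ) → Prop) [DecidablePred Q] :
    P {ω | Q fun i : Fin m => ξ i ω} =
      ∑ f : Fin m → Bool with Q (stepOf ∘ f), ∏ i, stepProb p q (f i) := by
  have hae : {ω | Q fun i : Fin m => ξ i ω} =ᵐ[P]
      ⋃ f ∈ ({f | Q (stepOf ∘ f)} : Finset (Fin m → Bool)),
        {ω | ∀ i : Fin m, ξ i ω = stepOf (f i)} := by
    refine eventuallyEq_set.mpr ?_
    filter_upwards [hsteps] with ω hω
    simp only [Set.mem_ofPred_eq, Set.mem_iUnion, mem_filter, mem_univ, true_and, exists_prop]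
    constructor
    · intro hQ
      refine ⟨fun i => decide (ξ i ω = 1), ?_, fun i => (stepOf_decide_eq_one (hω i)).symm⟩
      convert hQ using 1
      exact funext fun i => stepOf_decide_eq_one (hω i)
    · rintro ⟨f, hf, hωf⟩
      convert hf using 1
      exact funext hωf
  rw [measure_congr hae, measure_biUnion_finset]
  · exact sum_congr rfl fun f _ => measure_steps_eq_prod hindep hd₁ hd₂ f
  · refine fun f _ g _ hfg => Set.disjoint_left.mpr fun ω h₁ h₂ => hfg ?_
    exact funext fun i => stepOf_injective ((h₁ i).symm.trans (h₂ i))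
  · exact fun f _ => measurableSet_setOf_steps hmeas fun v => ∀ i, v i = stepOf (f i)

lemma prod_stepProb_of_height_eq_zero {n : ℕ} (f : Fin (2 * n) → Bool)
    (hf : height (stepOf ∘ f) (2 * n) = 0) :
    ∏ i, stepProb p q (f i) = ENNReal.ofReal p ^ n * ENNReal.ofReal q ^ n := by
  have hcard := card_filter_add_card_filter_not (s := univ) (p := fun i => f i = true)
  rw [card_univ, Fintype.card_fin] at hcard
  rw [height_eq_card_sub_card] at hf
  simp only [stepProb, prod_ite, prod_const]
  rw [show #{i | f i} = n by omega, show #{i | ¬f i} = n by omega]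

lemma measure_setOf_steps_of_height_eq_zero (hmeas : ∀ k, Measurable (ξ k))
    (hindep : iIndepFun ξ P)
    (hd₁ : ∀ k, P {ω | ξ k ω = 1} = ENNReal.ofReal p)
    (hd₂ : ∀ k, P {ω | ξ k ω = -1} = ENNReal.ofReal q)
    (hsteps : ∀ᵐ ω ∂P, ∀ k, ξ k ω = 1 ∨ ξ k ω = -1) {n : ℕ}
    (Q : (Fin (2 * n) → ℤ) → Prop) [DecidablePred Q]
    (hQ : ∀ v, Q v → height v (2 * n) = 0) :
    P {ω | Q fun i : Fin (2 * n) => ξ i ω} =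
      #{f : Fin (2 * n) → Bool | Q (stepOf ∘ f)} *
        (ENNReal.ofReal p ^ n * ENNReal.ofReal q ^ n) := by
  rw [measure_setOf_steps hmeas hindep hd₁ hd₂ hsteps,
    sum_congr rfl fun f hf => prod_stepProb_of_height_eq_zero f (hQ _ (mem_filter.mp hf).2),
    sum_const, nsmul_eq_mul]

lemma cond_visits_eq (hmeas : ∀ k, Measurable (ξ k)) (hindep : iIndepFun ξ P)
    (hp : 0 < p) (hq : 0 < q)
    (hd₁ : ∀ k, P {ω | ξ k ω = 1} = ENNReal.ofReal p)
    (hd₂ : ∀ k, P {ω | ξ k ω = -1} = ENNReal.ofReal q)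
    (hsteps : ∀ᵐ ω ∂P, ∀ k, ξ k ω = 1 ∨ ξ k ω = -1) (n r : ℕ) :
    ((P[|stays1 ξ (2 * n) ∩ {ω | walk1 ξ (2 * n) ω = 0}])
        {ω | visits ξ (2 * n) ω = r}).toReal =
      nonnegReturnsCount (2 * n) 0 r / catalan n := by
  have hinter :
      {ω | IsNonnegTo 0 fun i : Fin (2 * n) => ξ i ω} ∩ {ω | visits ξ (2 * n) ω = r} =
        {ω | (fun v => IsNonnegTo 0 v ∧ returns v = r) fun i : Fin (2 * n) => ξ i ω} := by
    ext ω
    simp [visits_eq_returns]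
  rw [bridge_eq_setOf_isNonnegTo, cond_apply (measurableSet_setOf_steps hmeas _), hinter,
    measure_setOf_steps_of_height_eq_zero hmeas hindep hd₁ hd₂ hsteps _ fun v hv => hv.2,
    measure_setOf_steps_of_height_eq_zero hmeas hindep hd₁ hd₂ hsteps
      (fun v => IsNonnegTo 0 v ∧ returns v = r) fun v hv => hv.1.2,
    ← nonnegCount, ← nonnegReturnsCount, nonnegCount_two_mul_zero]
  have hw : (ENNReal.ofReal p ^ n * ENNReal.ofReal q ^ n).toReal ≠ 0 := by
    simp [ENNReal.toReal_ofReal hp.le, ENNReal.toReal_ofReal hq.le, hp.ne', hq.ne']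
  generalize ENNReal.ofReal p ^ n * ENNReal.ofReal q ^ n = w at hw ⊢
  simp only [ENNReal.toReal_mul, ENNReal.toReal_inv, ENNReal.toReal_natCast]
  rw [← div_eq_inv_mul, mul_div_mul_right _ _ hw]

end Probability

end NonnegBridge

theorem stmt12_general
    {Ω : Type*} [MeasurableSpace Ω] (P : Measure Ω) [IsProbabilityMeasure P]
    (ξ : ℕ → Ω → ℤ) (hmeas : ∀ k, Measurable (ξ k))
    (hindep : iIndepFun ξ P)
    (p q : ℝ) (hp : 0 < p) (hq : 0 < q) (hpq : p + q = 1)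
    (hd₁ : ∀ k, P {ω | ξ k ω = 1} = ENNReal.ofReal p)
    (hd₂ : ∀ k, P {ω | ξ k ω = -1} = ENNReal.ofReal q)
    (r : ℕ) :
    Tendsto
      (fun n : ℕ =>
        ((P[|stays1 ξ (2 * n) ∩ {ω | walk1 ξ (2 * n) ω = 0}])
          {ω | visits ξ (2 * n) ω = r}).toReal)
      atTop (𝓝 ((r : ℝ) / 2 ^ (r + 1))) := by
  open NonnegBridge in
  have hsteps := ae_step_eq_one_or_neg_one hmeas hp.le hq.le hpq hd₁ hd₂
  have hlim := (tendsto_descFactorial_div_descFactorial (r + 1)).const_mul (r : ℝ)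
  rw [one_div_pow, ← div_eq_mul_one_div] at hlim
  refine hlim.congr' <| (eventually_ge_atTop (max r 1)).mono fun n hn => ?_
  dsimp only
  rw [cond_visits_eq hmeas hindep hp hq hd₁ hd₂ hsteps,
    nonnegReturnsCount_div_catalan (by omega) (by omega), mul_div_assoc]

/-- Non-negative bridge case: for every `p ∈ (0,1)` and every `r ≥ 1`, along even times,
`P(N_n = r | τ > n, S_n = 0) → r/2^{r+1}`; the limit does not depend on `p`. -/
theorem stmt12
    {Ω : Type*} [MeasurableSpace Ω] (P : Measure Ω) [IsProbabilityMeasure P]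
    (ξ : ℕ → Ω → ℤ) (hmeas : ∀ k, Measurable (ξ k))
    (hindep : iIndepFun ξ P)
    (p q : ℝ) (hp : 0 < p) (hq : 0 < q) (hpq : p + q = 1)
    (hd₁ : ∀ k, P {ω | ξ k ω = 1} = ENNReal.ofReal p)
    (hd₂ : ∀ k, P {ω | ξ k ω = -1} = ENNReal.ofReal q)
    (r : ℕ) (hr : 1 ≤ r) :
    Tendsto
      (fun n : ℕ =>
        ((P[|stays1 ξ (2 * n) ∩ {ω | walk1 ξ (2 * n) ω = 0}])
          {ω | visits ξ (2 * n) ω = r}).toReal)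
      atTop (𝓝 ((r : ℝ) / 2 ^ (r + 1))) :=
  stmt12_general P ξ hmeas hindep p q hp hq hpq hd₁ hd₂ r

end
end

section
/- Let (a_n)_{n≥0} and (b_n)_{n≥0} be sequences of positive real numbers such that a_n ~ a n^{−α} and b_n ~ b n^{−α} as n → ∞, for some α > 1 and a, b > 0. Then the series A = Σ_{n=0}^∞ a_n and B = Σ_{n=0}^∞ b_n converge, and Σ_{k=0}^n a_k b_{n−k} ~ (Ab + aB) n^{−α} as n → ∞. -/
open Filter Topology

private lemma aux_mul_rpow {u : ℕ → ℝ} {α c : ℝ} (hα : 1 < α) (hc : 0 < c)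
    (hu : Tendsto (fun n : ℕ => u n / (c / (n : ℝ) ^ α)) atTop (𝓝 1)) :
    Tendsto (fun n : ℕ => u n * (n : ℝ) ^ α) atTop (𝓝 c) := by
  have h := hu.const_mul c
  rw [mul_one] at h
  refine h.congr' ?_
  filter_upwards [eventually_ge_atTop 1] with n hn
  have hnpos : (0:ℝ) < (n:ℝ) ^ α :=
    Real.rpow_pos_of_pos (by exact_mod_cast Nat.lt_of_lt_of_le Nat.zero_lt_one hn) _
  field_simp

private lemma aux_bdd {u : ℕ → ℝ} {c : ℝ} (h : Tendsto u atTop (𝓝 c)) :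
    ∃ M : ℝ, 0 ≤ M ∧ ∀ n, u n ≤ M := by
  obtain ⟨M, hM⟩ := h.bddAbove_range
  exact ⟨max M 0, le_max_right _ _,
    fun n => le_trans (hM (Set.mem_range_self n)) (le_max_left _ _)⟩

private lemma aux_summable {u : ℕ → ℝ} {α : ℝ} (hα : 1 < α) (hpos : ∀ n, 0 ≤ u n)
    {M : ℝ} (hM : ∀ n, u n * (n : ℝ) ^ α ≤ M) : Summable u := by
  rw [← summable_nat_add_iff 1]
  have hsum : Summable (fun n : ℕ => M * (1 / ((n + 1 : ℕ) : ℝ) ^ α)) :=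
    (((summable_nat_add_iff 1).2 (Real.summable_one_div_nat_rpow.2 hα))).mul_left M
  refine Summable.of_nonneg_of_le (fun n => hpos _) (fun n => ?_) hsum
  have hp : (0:ℝ) < ((n + 1 : ℕ) : ℝ) ^ α :=
    Real.rpow_pos_of_pos (by exact_mod_cast Nat.succ_pos n) _
  rw [mul_one_div, le_div_iff₀ hp]
  exact hM (n + 1)

private lemma aux_shift {v : ℕ → ℝ} {α c : ℝ} (hα : 1 < α)
    (hv : Tendsto (fun n : ℕ => v n * (n : ℝ) ^ α) atTop (𝓝 c)) (k : ℕ) :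
    Tendsto (fun n : ℕ => v (n - k) * (n : ℝ) ^ α) atTop (𝓝 c) := by
  have h1 : Tendsto (fun n : ℕ => v (n - k) * ((n - k : ℕ) : ℝ) ^ α) atTop (𝓝 c) :=
    hv.comp (tendsto_sub_atTop_nat k)
  have hq : Tendsto (fun n : ℕ => ((n - k : ℕ) : ℝ) / (n : ℝ)) atTop (𝓝 1) := by
    have h2 : Tendsto (fun n : ℕ => (1:ℝ) - (k:ℝ)/(n:ℝ)) atTop (𝓝 (1 - 0)) :=
      Tendsto.sub tendsto_const_nhds (tendsto_const_div_atTop_nhds_zero_nat _)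
    rw [sub_zero] at h2
    refine h2.congr' ?_
    filter_upwards [eventually_ge_atTop (k + 1)] with n hn
    have hn0 : (0:ℝ) < (n:ℝ) := by exact_mod_cast Nat.lt_of_lt_of_le (Nat.succ_pos k) hn
    rw [Nat.cast_sub (Nat.le_of_succ_le hn), sub_div, div_self (ne_of_gt hn0)]
  have hq2 : Tendsto (fun n : ℕ => (n : ℝ) / ((n - k : ℕ) : ℝ)) atTop (𝓝 1) := by
    have := hq.inv₀ one_ne_zero
    rw [inv_one] at this
    exact this.congr (fun n => by rw [inv_div])
  have hr : Tendsto (fun n : ℕ => ((n : ℝ) / ((n - k : ℕ) : ℝ)) ^ α) atTop (𝓝 1) := by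
    have hcont := (Real.continuousAt_rpow_const 1 α (Or.inl one_ne_zero)).tendsto
    have := hcont.comp hq2
    rwa [Real.one_rpow] at this
  have := h1.mul hr
  rw [mul_one] at this
  refine this.congr' ?_
  filter_upwards [eventually_ge_atTop (k + 1)] with n hn
  have hnk : 1 ≤ n - k := by omega
  have hnk0 : (0:ℝ) < ((n - k : ℕ) : ℝ) := by exact_mod_cast hnk
  have hnkα : (0:ℝ) < ((n - k : ℕ) : ℝ) ^ α := Real.rpow_pos_of_pos hnk0 _
  rw [Real.div_rpow (Nat.cast_nonneg n) (le_of_lt hnk0)]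
  field_simp

private lemma aux_half {u v : ℕ → ℝ} {α cv : ℝ} (hα : 1 < α)
    (hupos : ∀ n, 0 ≤ u n) (hvpos : ∀ n, 0 ≤ v n)
    (hu : Summable u) (hv : Tendsto (fun n : ℕ => v n * (n : ℝ) ^ α) atTop (𝓝 cv))
    (t : ℕ → ℕ) (ht1 : ∀ k : ℕ, ∀ᶠ n in atTop, k ≤ t n)
    (ht2 : ∀ n k, k ≤ t n → n ≤ 2 * (n - k)) :
    Tendsto (fun n : ℕ => ∑' k : ℕ, (if k ≤ t n then u k * v (n - k) else 0) * (n : ℝ) ^ α)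
      atTop (𝓝 ((∑' n, u n) * cv)) := by
  obtain ⟨M, hM0, hM⟩ := aux_bdd hv
  have hαpos : (0:ℝ) < α := lt_trans one_pos hα
  have key := tendsto_tsum_of_dominated_convergence (𝓕 := atTop)
    (f := fun (n k : ℕ) => (if k ≤ t n then u k * v (n - k) else 0) * (n : ℝ) ^ α)
    (g := fun k => u k * cv) (bound := fun k => u k * (2 ^ α * M))
    (hu.mul_right _) ?_ ?_
  · rwa [tsum_mul_right] at key
  · intro k
    have := (aux_shift hα hv k).const_mul (u k)
    refine this.congr' ?_
    filter_upwards [ht1 k] with n hn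
    rw [if_pos hn, mul_assoc]
  · filter_upwards [] with n
    intro k
    by_cases hk : k ≤ t n
    · rw [if_pos hk]
      have hterm_nonneg : 0 ≤ u k * v (n - k) * (n:ℝ) ^ α :=
        mul_nonneg (mul_nonneg (hupos k) (hvpos _)) (Real.rpow_nonneg (Nat.cast_nonneg n) α)
      rw [Real.norm_eq_abs, abs_of_nonneg hterm_nonneg]
      rcases Nat.eq_zero_or_pos n with rfl | hn
      · rw [Nat.cast_zero, Real.zero_rpow (ne_of_gt hαpos), mul_zero]
        exact mul_nonneg (hupos k) (mul_nonneg (Real.rpow_nonneg (by norm_num) _) hM0)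
      · have hle : n ≤ 2 * (n - k) := ht2 n k hk
        have hcast : (n:ℝ) ≤ 2 * ((n - k : ℕ) : ℝ) := by
          have : ((n:ℕ):ℝ) ≤ ((2 * (n - k) : ℕ) : ℝ) := by exact_mod_cast hle
          rwa [Nat.cast_mul, Nat.cast_ofNat] at this
        have hpow : (n:ℝ) ^ α ≤ 2 ^ α * ((n - k : ℕ) : ℝ) ^ α := by
          calc (n:ℝ) ^ α ≤ (2 * ((n - k : ℕ) : ℝ)) ^ α :=
                Real.rpow_le_rpow (Nat.cast_nonneg n) hcast (le_of_lt hαpos)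
            _ = 2 ^ α * ((n - k : ℕ) : ℝ) ^ α :=
                Real.mul_rpow (by norm_num) (Nat.cast_nonneg _)
        have h1 : v (n - k) * (n:ℝ) ^ α ≤ 2 ^ α * M := by
          calc v (n - k) * (n:ℝ) ^ α ≤ v (n - k) * (2 ^ α * ((n - k : ℕ) : ℝ) ^ α) :=
                mul_le_mul_of_nonneg_left hpow (hvpos _)
            _ = 2 ^ α * (v (n - k) * ((n - k : ℕ) : ℝ) ^ α) := by ring
            _ ≤ 2 ^ α * M := mul_le_mul_of_nonneg_left (hM _) (Real.rpow_nonneg (by norm_num) _)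
        rw [mul_assoc]
        exact mul_le_mul_of_nonneg_left h1 (hupos k)
    · rw [if_neg hk, zero_mul, norm_zero]
      exact mul_nonneg (hupos k) (mul_nonneg (Real.rpow_nonneg (by norm_num) _) hM0)

/-- Convolution asymptotics: if `a_n ∼ a n^{-α}` and `b_n ∼ b n^{-α}` with `α > 1` and
`a, b > 0`, then both series converge and
`Σ_{k=0}^n a_k b_{n-k} ∼ (A b + a B) n^{-α}`, where `A = Σ a_n` and `B = Σ b_n`. -/
theorem stmt19 (a b : ℕ → ℝ) (α ca cb : ℝ) (hα : 1 < α) (hca : 0 < ca) (hcb : 0 < cb)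
    (hapos : ∀ n, 0 < a n) (hbpos : ∀ n, 0 < b n)
    (ha : Tendsto (fun n : ℕ => a n / (ca / (n : ℝ) ^ α)) atTop (𝓝 1))
    (hb : Tendsto (fun n : ℕ => b n / (cb / (n : ℝ) ^ α)) atTop (𝓝 1)) :
    Summable a ∧ Summable b ∧
      Tendsto
        (fun n : ℕ => (∑ k ∈ Finset.range (n + 1), a k * b (n - k)) * (n : ℝ) ^ α)
        atTop (𝓝 ((∑' n, a n) * cb + ca * (∑' n, b n))) := by
  have hA := aux_mul_rpow hα hca ha
  have hB := aux_mul_rpow hα hcb hb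
  obtain ⟨Ma, hMa0, hMa⟩ := aux_bdd hA
  obtain ⟨Mb, hMb0, hMb⟩ := aux_bdd hB
  have hSa : Summable a := aux_summable hα (fun n => (hapos n).le) hMa
  have hSb : Summable b := aux_summable hα (fun n => (hbpos n).le) hMb
  refine ⟨hSa, hSb, ?_⟩
  have T1 := aux_half hα (fun n => (hapos n).le) (fun n => (hbpos n).le) hSa hB
    (fun n => n / 2)
    (fun k => by filter_upwards [eventually_ge_atTop (2 * k)] with n hn; show k ≤ n / 2; omega)
    (fun n k hk => by have hk' : k ≤ n / 2 := hk; omega)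
  have T2 := aux_half hα (fun n => (hbpos n).le) (fun n => (hapos n).le) hSb hA
    (fun n => n - n / 2 - 1)
    (fun k => by filter_upwards [eventually_ge_atTop (2 * k + 2)] with n hn; show k ≤ n - n / 2 - 1; omega)
    (fun n k hk => by have hk' : k ≤ n - n / 2 - 1 := hk; omega)
  have := T1.add T2
  rw [show (∑' n, a n) * cb + (∑' n, b n) * ca = (∑' n, a n) * cb + ca * (∑' n, b n) by ring]
    at this
  refine this.congr' ?_
  filter_upwards [eventually_ge_atTop 1] with n hn
  -- rewrite each tsum as a finite sum
  have hF : (∑' k : ℕ, (if k ≤ n / 2 then a k * b (n - k) else 0) * (n : ℝ) ^ α)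
      = ∑ k ∈ Finset.range (n / 2 + 1), a k * b (n - k) * (n : ℝ) ^ α := by
    rw [tsum_eq_sum (s := Finset.range (n / 2 + 1))
      (fun k hk => by rw [if_neg (by simpa [Nat.lt_succ_iff] using hk), zero_mul])]
    exact Finset.sum_congr rfl fun k hk => by
      rw [if_pos (by simpa [Nat.lt_succ_iff] using hk)]
  have hG : (∑' k : ℕ, (if k ≤ n - n / 2 - 1 then b k * a (n - k) else 0) * (n : ℝ) ^ α)
      = ∑ k ∈ Finset.range (n - n / 2), b k * a (n - k) * (n : ℝ) ^ α := by
    rw [tsum_eq_sum (s := Finset.range (n - n / 2))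
      (fun k hk => by
        rw [if_neg (by simp only [Finset.mem_range] at hk; omega), zero_mul])]
    exact Finset.sum_congr rfl fun k hk => by
      rw [if_pos (by simp only [Finset.mem_range] at hk; omega)]
  rw [hF, hG, Finset.sum_mul]
  have hsplit : ∑ k ∈ Finset.range (n + 1), a k * b (n - k) * (n : ℝ) ^ α
      = (∑ k ∈ Finset.range (n / 2 + 1), a k * b (n - k) * (n : ℝ) ^ α)
        + ∑ k ∈ Finset.Ico (n / 2 + 1) (n + 1), a k * b (n - k) * (n : ℝ) ^ α := by
    rw [Finset.sum_range_add_sum_Ico _ (by omega)]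
  rw [hsplit]
  congr 1
  refine Finset.sum_nbij' (fun k => n - k) (fun k => n - k) ?_ ?_ ?_ ?_ ?_
  · intro k hk
    simp only [Finset.mem_range] at hk
    show n - k ∈ Finset.Ico (n / 2 + 1) (n + 1)
    simp only [Finset.mem_Ico]
    omega
  · intro k hk
    simp only [Finset.mem_Ico] at hk
    show n - k ∈ Finset.range (n - n / 2)
    simp only [Finset.mem_range]
    omega
  · intro k hk
    simp only [Finset.mem_range] at hk
    show n - (n - k) = k
    omega
  · intro k hk
    simp only [Finset.mem_Ico] at hk
    show n - (n - k) = k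
    omega
  · intro k hk
    simp only [Finset.mem_range] at hk
    show b k * a (n - k) * (n:ℝ) ^ α = a (n - k) * b (n - (n - k)) * (n:ℝ) ^ α
    have h2 : n - (n - k) = k := by omega
    rw [h2]
    ring
end
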